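/- arXiv:2104.05958 — 4 statements merged into one kernel-verified Lean document; each statement's English description precedes it below -/
import Mathlib

section
/- If T is a tree with maximum degree Δ, then the list star chromatic index of T satisfies ch'_star(T) ≤ ⌊3Δ/2⌋. -/
open SimpleGraph
open scoped Classical

/-- Two edges (as unordered pairs of vertices) are adjacent:
they are distinct and share an endpoint. -/
def EdgeAdj {V : Type*} (e₁ e₂ : Sym2 V) : Prop :=
  e₁ ≠ e₂ ∧ ∃ v, v ∈ e₁ ∧ v ∈ e₂

/-- `φ` is a star edge coloring of `G`: a proper edge coloring such that
no path of length four and no cycle of length four is bichromatic. -/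
def IsStarEdgeColoring {V : Type*} (G : SimpleGraph V) (φ : Sym2 V → ℕ) : Prop :=
  (∀ e₁ ∈ G.edgeSet, ∀ e₂ ∈ G.edgeSet, EdgeAdj e₁ e₂ → φ e₁ ≠ φ e₂) ∧
  (∀ (u v : V) (p : G.Walk u v), p.IsPath → p.length = 4 →
      ¬ ∃ c₁ c₂ : ℕ, ∀ e ∈ p.edges, φ e = c₁ ∨ φ e = c₂) ∧
  (∀ (u : V) (p : G.Walk u u), p.IsCycle → p.length = 4 →
      ¬ ∃ c₁ c₂ : ℕ, ∀ e ∈ p.edges, φ e = c₁ ∨ φ e = c₂)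

/-- `G` has a star edge coloring using colors `< k`. -/
def StarColorable {V : Type*} (G : SimpleGraph V) (k : ℕ) : Prop :=
  ∃ φ : Sym2 V → ℕ, (∀ e ∈ G.edgeSet, φ e < k) ∧ IsStarEdgeColoring G φ

/-- The star chromatic index of `G`. -/
noncomputable def starChromaticIndex {V : Type*} (G : SimpleGraph V) : ℕ :=
  sInf {k | StarColorable G k}

/-- `G` is star `k`-edge choosable. -/
def StarChoosable {V : Type*} (G : SimpleGraph V) (k : ℕ) : Prop :=
  ∀ L : Sym2 V → Finset ℕ, (∀ e ∈ G.edgeSet, k ≤ (L e).card) →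
    ∃ φ : Sym2 V → ℕ, (∀ e ∈ G.edgeSet, φ e ∈ L e) ∧ IsStarEdgeColoring G φ

/-- The list star chromatic index of `G`. -/
noncomputable def listStarChromaticIndex {V : Type*} (G : SimpleGraph V) : ℕ :=
  sInf {k | StarChoosable G k}

/-- The maximum Ore-degree `θ(G) = max_{xy ∈ E(G)} (d(x) + d(y))`. -/
noncomputable def oreDegree {V : Type*} (G : SimpleGraph V) [Fintype V] : ℕ :=
  sSup {n | ∃ x y, G.Adj x y ∧ n = G.degree x + G.degree y}

/-- `H = T ∪ C` is a generalized Halin graph with characteristic tree `T` and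
adjoint cycle `C`: `T` is a tree with `Δ(T) ≥ 3`, `C` is a cycle (a connected
`2`-regular subgraph on its support) passing exactly through the leaves of `T`,
the edges of `T` and `C` are disjoint, and `H` is their union. -/
def IsGenHalin {V : Type*} [Fintype V] (H T C : SimpleGraph V) : Prop :=
  T.IsTree ∧ 3 ≤ T.maxDegree ∧ H = T ⊔ C ∧ Disjoint T.edgeSet C.edgeSet ∧
  (∀ v, T.degree v = 1 ↔ C.degree v = 2) ∧
  (∀ v, C.degree v = 0 ∨ C.degree v = 2) ∧
  (∀ u v, C.degree u = 2 → C.degree v = 2 → C.Reachable u v)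

/-- A Halin graph: a generalized Halin graph whose characteristic tree has
no vertex of degree `2`. -/
def IsHalin {V : Type*} [Fintype V] (H T C : SimpleGraph V) : Prop :=
  IsGenHalin H T C ∧ ∀ v, T.degree v ≠ 2

/-- A complete Halin graph: all leaves of `T` are at the same distance
from the root. -/
def IsCompleteHalin {V : Type*} [Fintype V] (H T C : SimpleGraph V) : Prop :=
  IsHalin H T C ∧
    ∃ r, ∀ u v, T.degree u = 1 → T.degree v = 1 → T.dist r u = T.dist r v

/-!
Root the tree and color it from the root down, choosing at each vertex `p` the colors of all edges
from `p` to its children at once, from lists of size `Δ + q` with `q = ⌊Δ / 2⌋`. In a properly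
colored rooted tree a bichromatic path on four edges either climbs three edges and leaves the top
vertex along another edge, or climbs two edges and descends two through a pair of siblings. Every
vertex `v` carries a set `F v` of at most `q + 1` forbidden colors for the edges to its children,
containing the color of the edge above `v`; its at most `Δ - 1` children then still find distinct
admissible colors.

For every pair of siblings one of them forbids the color of the other, and orienting these pairs as
a near-regular tournament costs at most `⌊k / 2⌋` colors among `k` siblings. A child whose color
already occurs at the grandparent must in addition forbid the color of its parent edge; these
children take the positions of smaller out-degree in the tournament. There are at most `q` of
them: their colors are distinct and avoid `F p`, and `F` is padded so that all but `q` of the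
colors at the parent of `p` are forbidden at `p`.
-/

open Finset

namespace TreeStarColoring

variable {α : Type*}

theorem exists_injOn_mem_of_card_le (K : Finset α) (Ls : α → Finset ℕ)
    (h : ∀ a ∈ K, #K ≤ #(Ls a)) : ∃ c : α → ℕ, Set.InjOn c K ∧ ∀ a ∈ K, c a ∈ Ls a := by
  obtain ⟨f, hf, hfL⟩ := (all_card_le_biUnion_card_iff_exists_injective fun a : K => Ls a).1
    fun s => by
      obtain rfl | ⟨a, ha⟩ := s.eq_empty_or_nonempty
      · simp
      calc #s ≤ #K := by simpa using s.card_le_univ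
        _ ≤ #(Ls a) := h a a.2
        _ ≤ #(s.biUnion fun a : K => Ls a) :=
          card_le_card (subset_biUnion_of_mem (fun a : K => Ls a) ha)
  refine ⟨fun a => if ha : a ∈ K then f ⟨a, ha⟩ else 0, fun a ha b hb hab => ?_, fun a ha => ?_⟩
  · simp only [mem_coe] at ha hb
    simp only [ha, hb, dif_pos] at hab
    exact congrArg Subtype.val (hf hab)
  · simpa [ha] using hfL ⟨a, ha⟩

theorem exists_injOn_lt_card (s : Finset α) : ∃ f : α → ℕ, Set.InjOn f s ∧ ∀ a ∈ s, f a < #s := by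
  refine ⟨fun a => if ha : a ∈ s then s.equivFin ⟨a, ha⟩ else 0, fun a ha b hb hab => ?_,
    fun a ha => by simp [ha]⟩
  simp only [mem_coe] at ha hb
  simp only [ha, hb, dif_pos] at hab
  exact congrArg Subtype.val (s.equivFin.injective (Fin.ext hab))

def ParityBeats (x y : ℕ) : Prop := (x < y ∧ (x + y) % 2 = 1) ∨ (y < x ∧ (x + y) % 2 = 0)

theorem ParityBeats.total {x y : ℕ} (h : x ≠ y) : ParityBeats x y ∨ ParityBeats y x := by
  unfold ParityBeats; omega

theorem two_mul_card_parityBeats_add_le {x k : ℕ} (hx : x < k) :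
    2 * #{y ∈ range k | ParityBeats x y} + x % 2 ≤ k := by
  -- halving is injective on the indices beaten by `x`, and misses `x / 2` when `x` is odd
  have hinj : Set.InjOn (· / 2) (↑{y ∈ range k | ParityBeats x y} : Set ℕ) := by
    intro y₁ hy₁ y₂ hy₂ h
    simp only [mem_coe, mem_filter, mem_range] at hy₁ hy₂
    unfold ParityBeats at hy₁ hy₂
    dsimp only at h
    omega
  rcases Nat.mod_two_eq_zero_or_one x with hx2 | hx2
  · have := card_le_card_of_injOn (t := range (k / 2)) (· / 2) (fun y hy => by
      simp only [mem_coe, mem_filter, mem_range] at hy ⊢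
      unfold ParityBeats at hy
      omega) hinj
    rw [card_range] at this
    omega
  · have := card_le_card_of_injOn (t := (range ((k + 1) / 2)).erase (x / 2)) (· / 2) (fun y hy => by
      simp only [mem_coe, mem_filter, mem_erase, mem_range] at hy ⊢
      unfold ParityBeats at hy
      omega) hinj
    rw [card_erase_of_mem (by simp; omega), card_range] at this
    omega

theorem exists_injOn_lt_card_and_odd (K S : Finset α) (hSK : S ⊆ K) (hS : 2 * #S ≤ #K) :
    ∃ g : α → ℕ, Set.InjOn g K ∧ ∀ a ∈ K, g a < #K ∧ (a ∈ S → g a % 2 = 1) := by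
  obtain ⟨i, hi, hiS⟩ := exists_injOn_lt_card S
  obtain ⟨j, hj, hjS⟩ := exists_injOn_lt_card (K \ S)
  have hKS := card_sdiff_of_subset hSK
  -- `S` takes the odd positions `1, 3, …, 2 #S - 1`, the rest of `K` the other positions below `#K`
  refine ⟨fun a => if a ∈ S then 2 * i a + 1 else if j a < #S then 2 * j a else #S + j a,
    fun a ha b hb hab => ?_, fun a ha => ?_⟩
  · simp only [mem_coe] at ha hb
    by_cases haS : a ∈ S <;> by_cases hbS : b ∈ S
    · have := hiS a haS
      simp only [haS, hbS, if_true] at hab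
      exact hi haS hbS (by omega)
    · have := hiS a haS
      simp only [haS, hbS, if_true, if_false] at hab
      split_ifs at hab <;> omega
    · have := hiS b hbS
      simp only [haS, hbS, if_true, if_false] at hab
      split_ifs at hab <;> omega
    · simp only [haS, hbS, if_false] at hab
      refine hj (mem_sdiff.2 ⟨ha, haS⟩) (mem_sdiff.2 ⟨hb, hbS⟩) ?_
      split_ifs at hab <;> omega
  · by_cases haS : a ∈ S
    · have := hiS a haS
      simp only [haS, if_true]
      omega
    · have := hjS a (mem_sdiff.2 ⟨ha, haS⟩)
      simp only [haS, if_false, false_imp_iff, and_true]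
      split_ifs <;> omega

theorem exists_tournament (K S : Finset α) (hSK : S ⊆ K) (hS : 2 * #S ≤ #K) :
    ∃ r : α → α → Prop, (∀ a ∈ K, ∀ b ∈ K, a ≠ b → r a b ∨ r b a) ∧
      ∀ a ∈ K, 2 * #{b ∈ K.erase a | r a b} + (if a ∈ S then 1 else 0) ≤ #K := by
  obtain ⟨g, hginj, hg⟩ := exists_injOn_lt_card_and_odd K S hSK hS
  refine ⟨fun a b => ParityBeats (g a) (g b),
    fun a ha b hb hab => ParityBeats.total (hginj.ne ha hb hab), fun a ha => ?_⟩
  dsimp only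
  have hout : #{b ∈ K.erase a | ParityBeats (g a) (g b)} ≤ #{y ∈ range #K | ParityBeats (g a) y} :=
    card_le_card_of_injOn g (fun b hb => by
      simp only [mem_coe, mem_filter, mem_erase, mem_range] at hb ⊢
      exact ⟨(hg b hb.1.2).1, hb.2⟩)
      (hginj.mono fun b hb => by
        simp only [mem_coe, mem_filter, mem_erase] at hb
        exact hb.1.2)
  have := two_mul_card_parityBeats_add_le (hg a ha).1
  split_ifs with haS
  · have := (hg a ha).2 haS
    omega
  · omega

theorem exists_subsuperset_card_le_and_card_sdiff_le {B X : Finset ℕ} {q : ℕ} (hBX : B ⊆ X)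
    (hB : #B ≤ q) (hX : #X ≤ 2 * q) : ∃ Y, B ⊆ Y ∧ Y ⊆ X ∧ #Y ≤ q ∧ #(X \ Y) ≤ q := by
  obtain ⟨Y, hBY, hYX, hY⟩ := exists_subsuperset_card_eq hBX (le_max_left #B (#X - q))
    (max_le (card_le_card hBX) (Nat.sub_le _ _))
  refine ⟨Y, hBY, hYX, by omega, ?_⟩
  rw [card_sdiff_of_subset hYX]
  omega

/-- The colors chosen for the edges from a vertex `p` to its children `K`: `c w` colors the edge
`pw`, taken from `Ls w` and outside the colors `F₀` forbidden at `p`; `A` holds the color of the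
edge from `p` to its parent (empty at the root), `P` the colors of the other edges at that parent,
and `F w` the colors forbidden at `w`. -/
structure IsFanChoice (K : Finset α) (Ls : α → Finset ℕ) (F₀ A P : Finset ℕ) (q : ℕ)
    (c : α → ℕ) (F : α → Finset ℕ) : Prop where
  injOn : Set.InjOn c K
  mem : ∀ w ∈ K, c w ∈ Ls w
  notMem : ∀ w ∈ K, c w ∉ F₀
  mem_self : ∀ w ∈ K, c w ∈ F w
  card_le : ∀ w ∈ K, #(F w) ≤ q + 1
  card_sdiff_le : ∀ w ∈ K, #(((K.erase w).image c ∪ A) \ F w) ≤ q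
  subset_of_mem : ∀ w ∈ K, c w ∈ P → A ⊆ F w
  mem_or_mem : ∀ w ∈ K, ∀ w' ∈ K, w ≠ w' → c w' ∈ F w ∨ c w ∈ F w'

theorem IsFanChoice.congr {K : Finset α} {Ls : α → Finset ℕ} {F₀ A P : Finset ℕ} {q : ℕ}
    {c c' : α → ℕ} {F F' : α → Finset ℕ} (h : IsFanChoice K Ls F₀ A P q c F)
    (hc : ∀ w ∈ K, c w = c' w) (hF : ∀ w ∈ K, F w = F' w) :
    IsFanChoice K Ls F₀ A P q c' F' where
  injOn := h.injOn.congr fun w hw => hc w hw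
  mem w hw := hc w hw ▸ h.mem w hw
  notMem w hw := hc w hw ▸ h.notMem w hw
  mem_self w hw := hc w hw ▸ hF w hw ▸ h.mem_self w hw
  card_le w hw := hF w hw ▸ h.card_le w hw
  card_sdiff_le w hw := by
    rw [← hF w hw, ← image_congr fun v hv => hc v (mem_of_mem_erase hv)]
    exact h.card_sdiff_le w hw
  subset_of_mem w hw := hc w hw ▸ hF w hw ▸ h.subset_of_mem w hw
  mem_or_mem w hw w' hw' hne :=
    hc w hw ▸ hc w' hw' ▸ hF w hw ▸ hF w' hw' ▸ h.mem_or_mem w hw w' hw' hne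

theorem exists_tournament_card_le (K S : Finset α) (hSK : S ⊆ K) {q : ℕ} (hS : #S ≤ q)
    (hK : #K ≤ 2 * q + 1) (hKS : S.Nonempty → #K ≤ 2 * q) :
    ∃ r : α → α → Prop, (∀ a ∈ K, ∀ b ∈ K, a ≠ b → r a b ∨ r b a) ∧
      ∀ a ∈ K, #{b ∈ K.erase a | r a b} + (if a ∈ S then 1 else 0) ≤ q := by
  by_cases h : 2 * #S ≤ #K
  · obtain ⟨r, hr, hout⟩ := exists_tournament K S hSK h
    refine ⟨r, hr, fun a ha => ?_⟩
    have := hout a ha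
    split_ifs at this ⊢ with haS
    · have := hKS ⟨a, haS⟩
      omega
    · omega
  · -- `S` does not fit into the odd positions, but then `K` is too small to need them
    obtain ⟨r, hr, hout⟩ := exists_tournament K ∅ (empty_subset _) (by simp)
    refine ⟨r, hr, fun a ha => ?_⟩
    have := hout a ha
    simp only [notMem_empty, if_false, add_zero] at this
    split_ifs <;> omega

theorem exists_isFanChoice_of_subset {K : Finset α} {Ls : α → Finset ℕ} {F₀ A P : Finset ℕ}
    {q : ℕ} {c : α → ℕ} (B : α → Finset ℕ) (hc : Set.InjOn c K)
    (hcL : ∀ w ∈ K, c w ∈ Ls w ∧ c w ∉ F₀) (hKA : #K + #A ≤ 2 * q + 1)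
    (hBX : ∀ w ∈ K, B w ⊆ (K.erase w).image c ∪ A) (hB : ∀ w ∈ K, #(B w) ≤ q)
    (hAB : ∀ w ∈ K, c w ∈ P → A ⊆ B w)
    (hBB : ∀ w ∈ K, ∀ w' ∈ K, w ≠ w' → c w' ∈ B w ∨ c w ∈ B w') :
    ∃ F, IsFanChoice K Ls F₀ A P q c F := by
  have hX : ∀ w ∈ K, #((K.erase w).image c ∪ A) ≤ 2 * q := fun w hw => by
    have := card_union_le ((K.erase w).image c) A
    have := card_image_le (s := K.erase w) (f := c)
    have := card_erase_of_mem hw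
    have := card_pos.2 ⟨w, hw⟩
    omega
  choose! Y hBY hYX hY hXY using fun w hw =>
    exists_subsuperset_card_le_and_card_sdiff_le (hBX w hw) (hB w hw) (hX w hw)
  have hYF : ∀ w, Y w ⊆ insert (c w) (Y w) := fun w => subset_insert _ _
  exact ⟨fun w => insert (c w) (Y w), hc, fun w hw => (hcL w hw).1, fun w hw => (hcL w hw).2,
    fun w _ => mem_insert_self _ _,
    fun w hw => (card_insert_le _ _).trans (by have := hY w hw; omega),
    fun w hw => (card_le_card (sdiff_subset_sdiff subset_rfl (hYF w))).trans (hXY w hw),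
    fun w hw hwP => (hAB w hw hwP).trans ((hBY w hw).trans (hYF w)),
    fun w hw w' hw' hne => (hBB w hw w' hw' hne).imp (fun h => hYF w (hBY w hw h))
      fun h => hYF w' (hBY w' hw' h)⟩

theorem exists_isFanChoice (K : Finset α) (Ls : α → Finset ℕ) (F₀ A P : Finset ℕ) {q : ℕ}
    (hLs : ∀ w ∈ K, #F₀ + #K ≤ #(Ls w)) (hA : #A ≤ 1) (hKA : #K + #A ≤ 2 * q + 1)
    (hP : #(P \ F₀) ≤ q) : ∃ c F, IsFanChoice K Ls F₀ A P q c F := by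
  obtain ⟨c, hc, hcL⟩ := exists_injOn_mem_of_card_le K (fun w => Ls w \ F₀) fun w hw => by
    have := le_card_sdiff F₀ (Ls w)
    have := hLs w hw
    omega
  simp only [mem_sdiff] at hcL
  -- a child whose color occurs at the grandparent has to forbid the color in `A` as well
  set bad := {w ∈ K | c w ∈ P ∧ A.Nonempty}
  have hbad : #bad ≤ q := by
    refine (card_le_card_of_injOn c (fun w hw => ?_) (hc.mono fun w hw => ?_)).trans hP
    · simp only [bad, mem_coe, mem_filter] at hw
      exact mem_sdiff.2 ⟨hw.2.1, (hcL w hw.1).2⟩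
    · exact (mem_filter.1 hw).1
  obtain ⟨r, hr, hout⟩ := exists_tournament_card_le K bad (filter_subset _ _) hbad (by omega)
    fun ⟨w, hw⟩ => by
      have := (mem_filter.1 hw).2.2.card_pos
      omega
  refine ⟨c, exists_isFanChoice_of_subset
    (fun w => {b ∈ K.erase w | r w b}.image c ∪ if c w ∈ P then A else ∅) hc hcL hKA
    (fun w _ => union_subset_union (image_subset_image (filter_subset _ _)) (by split_ifs <;> simp))
    (fun w hw => (card_union_le _ _).trans ?_) (fun w _ hwP => by simp [hwP])
    fun w hw w' hw' hne => (hr w hw w' hw' hne).imp (fun h => ?_) fun h => ?_⟩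
  · have hA' : #(if c w ∈ P then A else ∅) ≤ if w ∈ bad then 1 else 0 := by
      split_ifs with hwP hwb hwb
      · exact hA
      · refine Nat.le_zero.2 (card_eq_zero.2 (not_nonempty_iff_eq_empty.1 fun hA₁ => hwb ?_))
        exact mem_filter.2 ⟨hw, hwP, hA₁⟩
      all_goals simp
    have := card_image_le (s := {b ∈ K.erase w | r w b}) (f := c)
    have := hout w hw
    omega
  · exact mem_union_left _ (mem_image_of_mem c (mem_filter.2 ⟨mem_erase.2 ⟨hne.symm, hw'⟩, h⟩))
  · exact mem_union_left _ (mem_image_of_mem c (mem_filter.2 ⟨mem_erase.2 ⟨hne, hw⟩, h⟩))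

end TreeStarColoring

namespace SimpleGraph

variable {V : Type*} {T : SimpleGraph V}

structure Rooting (T : SimpleGraph V) where
  root : V
  par : V → V
  dep : V → ℕ
  dep_par : ∀ v, v ≠ root → dep (par v) + 1 = dep v
  adj_iff : ∀ v w, T.Adj v w ↔ (v ≠ root ∧ par v = w) ∨ (w ≠ root ∧ par w = v)

theorem IsTree.eq_of_adj_of_dist_add_one_eq (hT : T.IsTree) (r : V) {v w₁ w₂ : V}
    (h₁ : T.Adj v w₁) (h₂ : T.Adj v w₂) (hd₁ : T.dist r w₁ + 1 = T.dist r v)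
    (hd₂ : T.dist r w₂ + 1 = T.dist r v) : w₁ = w₂ := by
  obtain ⟨p, hp, -⟩ := hT.connected.exists_path_of_dist r v
  suffices key : ∀ w, T.Adj v w → T.dist r w + 1 = T.dist r v → w = p.penultimate by
    rw [key w₁ h₁ hd₁, key w₂ h₂ hd₂]
  intro w hw hd
  obtain ⟨q, hq, hql⟩ := hT.connected.exists_path_of_dist r w
  have hvq : v ∉ q.support := fun hv => by
    have := T.dist_le (q.takeUntil v hv)
    have := q.length_takeUntil_le_length hv
    omega
  exact hT.isAcyclic.eq_penultimate_of_adj_end hp hw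
    (hT.isAcyclic.mem_support_of_ne_mem_support_of_adj_of_isPath hp hq hw hvq)

theorem IsTree.exists_adj_dist_add_one_eq (hT : T.IsTree) (r : V) {v : V} (hv : v ≠ r) :
    ∃ w, T.Adj v w ∧ T.dist r w + 1 = T.dist r v := by
  obtain ⟨p, hp⟩ := hT.connected.exists_walk_length_eq_dist v r
  cases p with
  | nil => exact absurd rfl hv
  | cons h q =>
    refine ⟨_, h, ?_⟩
    have := T.dist_le q.reverse
    rw [Walk.length_reverse] at this
    rw [Walk.length_cons, dist_comm] at hp
    rcases hT.dist_eq_dist_add_one_of_adj r h with hd | hd <;> omega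

theorem IsTree.nonempty_rooting (hT : T.IsTree) : Nonempty T.Rooting := by
  obtain ⟨r⟩ := hT.connected.nonempty
  choose! par hadj hdist using fun v (hv : v ≠ r) => hT.exists_adj_dist_add_one_eq r hv
  have hpar : ∀ v w, T.Adj v w → T.dist r w + 1 = T.dist r v → v ≠ r ∧ par v = w := by
    intro v w h hd
    have hv : v ≠ r := by
      rintro rfl
      simp at hd
    exact ⟨hv, hT.eq_of_adj_of_dist_add_one_eq r (hadj v hv) h (hdist v hv) hd⟩
  refine ⟨⟨r, par, T.dist r, hdist, fun v w => ⟨fun h => ?_, ?_⟩⟩⟩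
  · rcases hT.dist_eq_dist_add_one_of_adj r h with hd | hd
    · exact .inl (hpar v w h hd.symm)
    · exact .inr (hpar w v h.symm hd.symm)
  · rintro (⟨hv, rfl⟩ | ⟨hw, rfl⟩)
    · exact hadj v hv
    · exact (hadj w hw).symm

namespace Rooting

open TreeStarColoring

variable (R : T.Rooting) {p v w x y z x₀ x₁ x₂ x₃ x₄ : V}

/-! A coloring of the edges of a rooted tree is encoded by `col : V → ℕ`, where `col v` is the
color of the edge from `v` to its parent. -/

noncomputable def upColor (col : V → ℕ) (v : V) : Finset ℕ := if v = R.root then ∅ else {col v}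

def edgeColoring (col : V → ℕ) : Sym2 V → ℕ :=
  Sym2.lift ⟨fun a b => if R.dep a < R.dep b then col b else if R.dep b < R.dep a then col a else 0,
    fun a b => by dsimp only; split_ifs <;> first | rfl | omega⟩

theorem card_upColor_le (col : V → ℕ) (v : V) : #(R.upColor col v) ≤ 1 := by
  unfold upColor
  split_ifs <;> simp

variable [Fintype V]

noncomputable def children (p : V) : Finset V := {v | v ≠ R.root ∧ R.par v = p}

theorem mem_children : v ∈ R.children p ↔ v ≠ R.root ∧ R.par v = p := by
  simp [children]

theorem adj_iff_mem_children : T.Adj v w ↔ v ∈ R.children w ∨ w ∈ R.children v := by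
  rw [R.adj_iff, mem_children, mem_children]

theorem dep_of_mem_children (h : v ∈ R.children p) : R.dep v = R.dep p + 1 := by
  obtain ⟨hv, rfl⟩ := R.mem_children.1 h
  exact (R.dep_par v hv).symm

theorem ne_root_of_mem_children (h : v ∈ R.children p) : v ≠ R.root :=
  (R.mem_children.1 h).1

theorem adj_of_mem_children (h : v ∈ R.children p) : T.Adj p v :=
  R.adj_iff_mem_children.2 (.inr h)

theorem mem_children_of_adj (h : v ∈ R.children p) (hw : T.Adj v w) (hwp : w ≠ p) :
    w ∈ R.children v := by
  refine (R.adj_iff_mem_children.1 hw).resolve_left fun h' => hwp ?_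
  rw [← (R.mem_children.1 h).2, (R.mem_children.1 h').2]

theorem neighborFinset_eq (p : V) :
    T.neighborFinset p = if p = R.root then R.children p else insert (R.par p) (R.children p) := by
  ext w
  rw [mem_neighborFinset, adj_iff_mem_children, R.mem_children (v := p)]
  split_ifs with hp
  · simp [hp]
  · simp [hp, eq_comm]

theorem degree_eq (p : V) :
    T.degree p = #(R.children p) + if p = R.root then 0 else 1 := by
  rw [← card_neighborFinset_eq_degree, R.neighborFinset_eq]
  split_ifs with hp
  · rfl
  · refine card_insert_of_notMem fun h => ?_
    have := R.dep_of_mem_children h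
    have := R.dep_par p hp
    omega

noncomputable def colorsAtParent (col : V → ℕ) (v : V) : Finset ℕ :=
  if v = R.root then ∅ else ((R.children (R.par v)).erase v).image col ∪ R.upColor col (R.par v)

theorem edgeColoring_of_mem_children {col : V → ℕ} (h : v ∈ R.children p) :
    R.edgeColoring col s(p, v) = col v := by
  simp [edgeColoring, R.dep_of_mem_children h]

theorem edgeColoring_of_mem_children' {col : V → ℕ} (h : v ∈ R.children p) :
    R.edgeColoring col s(v, p) = col v := by
  rw [Sym2.eq_swap, R.edgeColoring_of_mem_children h]

theorem colorsAtParent_of_mem_children (col : V → ℕ) (h : v ∈ R.children p) :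
    R.colorsAtParent col v = ((R.children p).erase v).image col ∪ R.upColor col p := by
  obtain ⟨hv, rfl⟩ := R.mem_children.1 h
  simp [colorsAtParent, hv]

theorem card_children_add_card_upColor (col : V → ℕ) (p : V) :
    #(R.children p) + #(R.upColor col p) = T.degree p := by
  rw [R.degree_eq]
  unfold upColor
  split_ifs <;> simp

def IsGoodFan (L : Sym2 V → Finset ℕ) (q : ℕ) (col : V → ℕ) (F : V → Finset ℕ) (p : V) : Prop :=
  IsFanChoice (R.children p) (fun v => L s(p, v)) (F p) (R.upColor col p)
    (R.colorsAtParent col p) q col F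

section Star

variable {L : Sym2 V → Finset ℕ} {q : ℕ} {col : V → ℕ} {F : V → Finset ℕ}

theorem col_ne_of_mem_children (hgood : ∀ p, R.IsGoodFan L q col F p)
    (hv : v ∈ R.children p) (hw : w ∈ R.children v) :
    col w ≠ col v := fun h => (hgood v).notMem w hw (h ▸ (hgood p).mem_self v hv)

theorem col_notMem_colorsAtParent (hgood : ∀ p, R.IsGoodFan L q col F p)
    (hv : v ∈ R.children p) (hw : w ∈ R.children v)
    (hp : p ≠ R.root) (h : col w = col p) : col v ∉ R.colorsAtParent col p := fun hmem => by
  have := (hgood p).subset_of_mem v hv hmem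
  simp only [upColor, hp, if_false, singleton_subset_iff] at this
  exact (hgood v).notMem w hw (h ▸ this)

theorem not_col_eq_and_col_eq (hgood : ∀ p, R.IsGoodFan L q col F p)
    (hv : v ∈ R.children p) (hv' : y ∈ R.children p) (hne : v ≠ y)
    (hw : w ∈ R.children v) (hw' : z ∈ R.children y) : ¬(col w = col y ∧ col z = col v) := by
  rintro ⟨h, h'⟩
  rcases (hgood p).mem_or_mem v hv y hv' hne with hF | hF
  · exact (hgood v).notMem w hw (h ▸ hF)
  · exact (hgood y).notMem z hw' (h' ▸ hF)

theorem edgeColoring_ne (hgood : ∀ p, R.IsGoodFan L q col F p) (hxy : T.Adj x y)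
    (hyz : T.Adj y z) (hxz : x ≠ z) : R.edgeColoring col s(x, y) ≠ R.edgeColoring col s(y, z) := by
  rcases R.adj_iff_mem_children.1 hxy with hx | hy
  · rw [R.edgeColoring_of_mem_children' hx]
    rcases R.adj_iff_mem_children.1 hyz with hy | hz
    · rw [R.edgeColoring_of_mem_children' hy]
      exact R.col_ne_of_mem_children hgood hy hx
    · rw [R.edgeColoring_of_mem_children hz]
      exact (hgood y).injOn.ne hx hz hxz
  · rw [R.edgeColoring_of_mem_children hy,
      R.edgeColoring_of_mem_children (R.mem_children_of_adj hy hyz hxz.symm)]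
    exact (R.col_ne_of_mem_children hgood hy (R.mem_children_of_adj hy hyz hxz.symm)).symm

theorem edgeColoring_mem_colorsAtParent (hx : x ∈ R.children y) (hyz : T.Adj y z)
    (hzx : z ≠ x) : R.edgeColoring col s(y, z) ∈ R.colorsAtParent col x := by
  rw [R.colorsAtParent_of_mem_children col hx]
  rcases R.adj_iff_mem_children.1 hyz with hy | hz
  · rw [R.edgeColoring_of_mem_children' hy]
    simp [upColor, R.ne_root_of_mem_children hy]
  · rw [R.edgeColoring_of_mem_children hz]
    exact mem_union_left _ (mem_image_of_mem col (mem_erase.2 ⟨hzx, hz⟩))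

theorem not_bichromatic_of_mem_children (hgood : ∀ p, R.IsGoodFan L q col F p)
    (h₀ : x₀ ∈ R.children x₁) (h₁ : x₁ ∈ R.children x₂) (h₂ : T.Adj x₂ x₃) (h₃ : T.Adj x₃ x₄)
    (h₁₃ : x₁ ≠ x₃) (h₂₄ : x₂ ≠ x₄) :
    ¬(R.edgeColoring col s(x₀, x₁) = R.edgeColoring col s(x₂, x₃) ∧
      R.edgeColoring col s(x₁, x₂) = R.edgeColoring col s(x₃, x₄)) := by
  rw [R.edgeColoring_of_mem_children' h₀, R.edgeColoring_of_mem_children' h₁]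
  rcases R.adj_iff_mem_children.1 h₂ with h₂ | h₃'
  · rw [R.edgeColoring_of_mem_children' h₂]
    exact fun h => R.col_notMem_colorsAtParent hgood h₁ h₀ (R.ne_root_of_mem_children h₂) h.1
      (h.2 ▸ R.edgeColoring_mem_colorsAtParent h₂ h₃ h₂₄.symm)
  · have h₄ := R.mem_children_of_adj h₃' h₃ h₂₄.symm
    rw [R.edgeColoring_of_mem_children h₃', R.edgeColoring_of_mem_children h₄]
    exact fun ⟨h, h'⟩ => R.not_col_eq_and_col_eq hgood h₁ h₃' h₁₃ h₀ h₄ ⟨h, h'.symm⟩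

theorem mem_children_and_mem_children_or (h₀₁ : T.Adj x₀ x₁) (h₁₂ : T.Adj x₁ x₂)
    (h₂₃ : T.Adj x₂ x₃) (h₃₄ : T.Adj x₃ x₄) (h₀₂ : x₀ ≠ x₂) (h₁₃ : x₁ ≠ x₃) (h₂₄ : x₂ ≠ x₄) :
    (x₀ ∈ R.children x₁ ∧ x₁ ∈ R.children x₂) ∨ (x₄ ∈ R.children x₃ ∧ x₃ ∈ R.children x₂) := by
  have down (h : x₂ ∈ R.children x₁) : x₄ ∈ R.children x₃ ∧ x₃ ∈ R.children x₂ :=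
    have h₃ := R.mem_children_of_adj h h₂₃ h₁₃.symm
    ⟨R.mem_children_of_adj h₃ h₃₄ h₂₄.symm, h₃⟩
  rcases R.adj_iff_mem_children.1 h₀₁ with h₀ | h₁
  · rcases R.adj_iff_mem_children.1 h₁₂ with h₁ | h₂
    · exact .inl ⟨h₀, h₁⟩
    · exact .inr (down h₂)
  · exact .inr (down (R.mem_children_of_adj h₁ h₁₂ h₀₂.symm))

theorem not_bichromatic (hgood : ∀ p, R.IsGoodFan L q col F p) (h₀₁ : T.Adj x₀ x₁)
    (h₁₂ : T.Adj x₁ x₂) (h₂₃ : T.Adj x₂ x₃) (h₃₄ : T.Adj x₃ x₄) (h₀₂ : x₀ ≠ x₂) (h₁₃ : x₁ ≠ x₃)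
    (h₂₄ : x₂ ≠ x₄) :
    ¬(R.edgeColoring col s(x₀, x₁) = R.edgeColoring col s(x₂, x₃) ∧
      R.edgeColoring col s(x₁, x₂) = R.edgeColoring col s(x₃, x₄)) := by
  rcases R.mem_children_and_mem_children_or h₀₁ h₁₂ h₂₃ h₃₄ h₀₂ h₁₃ h₂₄ with ⟨h₀, h₁⟩ | ⟨h₄, h₃⟩
  · exact R.not_bichromatic_of_mem_children hgood h₀ h₁ h₂₃ h₃₄ h₁₃ h₂₄
  · rintro ⟨h, h'⟩
    refine R.not_bichromatic_of_mem_children hgood h₄ h₃ h₁₂.symm h₀₁.symm h₁₃.symm h₀₂.symm ?_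
    rw [Sym2.eq_swap (a := x₄), Sym2.eq_swap (a := x₂) (b := x₁), Sym2.eq_swap (a := x₃) (b := x₂),
      Sym2.eq_swap (a := x₁) (b := x₀)]
    exact ⟨h'.symm, h.symm⟩

theorem isStarEdgeColoring (hT : T.IsTree) (hgood : ∀ p, R.IsGoodFan L q col F p) :
    IsStarEdgeColoring T (R.edgeColoring col) := by
  refine ⟨?_, ?_, fun u p hp _ => (hT.isAcyclic p hp).elim⟩
  · rintro e₁ he₁ e₂ he₂ ⟨hne, x, hx₁, hx₂⟩
    obtain ⟨y₁, rfl⟩ := Sym2.mem_iff_exists.1 hx₁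
    obtain ⟨y₂, rfl⟩ := Sym2.mem_iff_exists.1 hx₂
    rw [mem_edgeSet] at he₁ he₂
    rw [Sym2.eq_swap]
    exact R.edgeColoring_ne hgood he₁.symm he₂ fun h => hne (h ▸ rfl)
  · rintro u v p hp hlen ⟨c₁, c₂, hc⟩
    obtain _ | ⟨h₁, _ | ⟨h₂, _ | ⟨h₃, _ | ⟨h₄, _ | ⟨h₅, p⟩⟩⟩⟩⟩ := p <;>
      simp only [Walk.length_cons, Walk.length_nil] at hlen <;> try omega
    rename_i x₁ x₂ x₃
    simp only [Walk.isPath_def, Walk.support_cons, Walk.support_nil, List.nodup_cons, List.mem_cons,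
      List.not_mem_nil, or_false, not_or, List.nodup_nil, and_true] at hp
    simp only [Walk.edges_cons, Walk.edges_nil, List.mem_cons, List.not_mem_nil, or_false,
      forall_eq_or_imp, forall_eq] at hc
    obtain ⟨⟨-, h₀₂, -⟩, ⟨-, h₁₃, -⟩, ⟨-, h₂₄⟩, -⟩ := hp
    have := R.edgeColoring_ne hgood h₁ h₂ h₀₂
    have := R.edgeColoring_ne hgood h₂ h₃ h₁₃
    have := R.edgeColoring_ne hgood h₃ h₄ h₂₄
    -- on a properly colored path two colors alternate
    exact R.not_bichromatic hgood h₁ h₂ h₃ h₄ h₀₂ h₁₃ h₂₄ (by omega)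

end Star

section Construction

variable (L : Sym2 V → Finset ℕ) {q Δ : ℕ} {col col' : V → ℕ} {F F' : V → Finset ℕ}

theorem colorsAtParent_congr (h : ∀ x, R.dep x ≤ R.dep v → col' x = col x) :
    R.colorsAtParent col' v = R.colorsAtParent col v := by
  by_cases hv : v = R.root
  · simp [colorsAtParent, hv]
  have hmem : v ∈ R.children (R.par v) := R.mem_children.2 ⟨hv, rfl⟩
  have hdep := R.dep_par v hv
  rw [R.colorsAtParent_of_mem_children col' hmem, R.colorsAtParent_of_mem_children col hmem]
  congr 1
  · refine image_congr fun x hx => h x ?_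
    rw [R.dep_of_mem_children (mem_of_mem_erase (mem_coe.1 hx))]
    omega
  · simp only [upColor, h (R.par v) (by omega)]

theorem isGoodFan_of_isFanChoice {c : V → ℕ} {G : V → Finset ℕ}
    (h : IsFanChoice (R.children p) (fun v => L s(p, v)) (F p) (R.upColor col p)
      (R.colorsAtParent col p) q c G)
    (hc : ∀ v ∈ R.children p, c v = col' v) (hG : ∀ v ∈ R.children p, G v = F' v)
    (hcol : ∀ x, R.dep x ≤ R.dep p → col' x = col x) (hF : F' p = F p) :
    R.IsGoodFan L q col' F' p := by
  unfold IsGoodFan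
  rw [hF, R.colorsAtParent_congr hcol,
    show R.upColor col' p = R.upColor col p by simp only [upColor, hcol p le_rfl]]
  exact h.congr hc hG

theorem exists_isFanChoice_at (hdeg : ∀ v, T.degree v ≤ Δ) (hΔ : Δ ≤ 2 * q + 1)
    (hL : ∀ e ∈ T.edgeSet, Δ + q ≤ #(L e)) (hroot : F R.root = ∅)
    (hpar : p ≠ R.root → R.IsGoodFan L q col F (R.par p)) :
    ∃ c G, IsFanChoice (R.children p) (fun v => L s(p, v)) (F p) (R.upColor col p)
      (R.colorsAtParent col p) q c G := by
  have hdeg' := R.card_children_add_card_upColor col p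
  have := hdeg p
  have hready : #(F p) + #(R.children p) ≤ Δ + q ∧ #(R.colorsAtParent col p \ F p) ≤ q := by
    by_cases hp : p = R.root
    · subst hp
      simp only [upColor, colorsAtParent, if_true, hroot, card_empty, empty_sdiff] at hdeg' ⊢
      omega
    have hmem : p ∈ R.children (R.par p) := R.mem_children.2 ⟨hp, rfl⟩
    have h := hpar hp
    refine ⟨?_, ?_⟩
    · have := h.card_le p hmem
      simp only [upColor, hp, if_false, card_singleton] at hdeg'
      omega
    · rw [R.colorsAtParent_of_mem_children col hmem]
      exact h.card_sdiff_le p hmem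
  exact exists_isFanChoice (R.children p) (fun v => L s(p, v)) (F p) _ _
    (fun v hv => hready.1.trans (hL s(p, v) (R.adj_of_mem_children hv)))
    (R.card_upColor_le col p) (by omega) hready.2

theorem exists_forall_dep_lt_isGoodFan (hdeg : ∀ v, T.degree v ≤ Δ) (hΔ : Δ ≤ 2 * q + 1)
    (hL : ∀ e ∈ T.edgeSet, Δ + q ≤ #(L e)) (d : ℕ) :
    ∃ col F, F R.root = ∅ ∧ ∀ p, R.dep p < d → R.IsGoodFan L q col F p := by
  induction d with
  | zero => exact ⟨0, fun _ => ∅, rfl, fun p hp => absurd hp (Nat.not_lt_zero _)⟩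
  | succ d ih =>
    obtain ⟨col, F, hroot, hgood⟩ := ih
    have hfan : ∀ p, ∃ c G, R.dep p = d → IsFanChoice (R.children p) (fun v => L s(p, v)) (F p)
        (R.upColor col p) (R.colorsAtParent col p) q c G := by
      intro p
      by_cases hp : R.dep p = d
      · obtain ⟨c, G, h⟩ := R.exists_isFanChoice_at L hdeg hΔ hL hroot fun hp' =>
          hgood _ (by have := R.dep_par p hp'; omega)
        exact ⟨c, G, fun _ => h⟩
      · exact ⟨0, fun _ => ∅, fun h => absurd h hp⟩
    choose c G hcG using hfan
    let new (x : V) : Prop := x ≠ R.root ∧ R.dep (R.par x) = d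
    have hold : ∀ x, R.dep x ≤ d → ¬new x := fun x hx ⟨hx', h⟩ => by
      have := R.dep_par x hx'
      omega
    refine ⟨fun x => if new x then c (R.par x) x else col x,
      fun x => if new x then G (R.par x) x else F x, by simp [new, hroot], fun p hp => ?_⟩
    rcases Nat.lt_succ_iff_lt_or_eq.1 hp with hp | hp
    · have hchild : ∀ v ∈ R.children p, ¬new v := fun v hv =>
        hold v (by rw [R.dep_of_mem_children hv]; omega)
      exact R.isGoodFan_of_isFanChoice L (hgood p hp) (fun v hv => (if_neg (hchild v hv)).symm)
        (fun v hv => (if_neg (hchild v hv)).symm) (fun x hx => if_neg (hold x (by omega)))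
        (if_neg (hold p hp.le))
    · have hchild : ∀ v ∈ R.children p, new v ∧ R.par v = p := fun v hv => by
        obtain ⟨hv', rfl⟩ := R.mem_children.1 hv
        exact ⟨⟨hv', hp⟩, rfl⟩
      refine R.isGoodFan_of_isFanChoice L (hcG p hp) (fun v hv => ?_) (fun v hv => ?_)
        (fun x hx => if_neg (hold x (by omega))) (if_neg (hold p hp.le))
      · rw [if_pos (hchild v hv).1, (hchild v hv).2]
      · rw [if_pos (hchild v hv).1, (hchild v hv).2]

theorem exists_forall_isGoodFan (hdeg : ∀ v, T.degree v ≤ Δ) (hΔ : Δ ≤ 2 * q + 1)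
    (hL : ∀ e ∈ T.edgeSet, Δ + q ≤ #(L e)) : ∃ col F, ∀ p, R.IsGoodFan L q col F p := by
  obtain ⟨col, F, -, h⟩ := R.exists_forall_dep_lt_isGoodFan L hdeg hΔ hL (univ.sup R.dep + 1)
  exact ⟨col, F, fun p => h p (Nat.lt_succ_of_le (le_sup (mem_univ p)))⟩

theorem edgeColoring_mem (hgood : ∀ p, R.IsGoodFan L q col F p) :
    ∀ e ∈ T.edgeSet, R.edgeColoring col e ∈ L e := by
  refine Sym2.ind fun x y hxy => ?_
  rcases R.adj_iff_mem_children.1 hxy with hx | hy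
  · rw [R.edgeColoring_of_mem_children' hx, Sym2.eq_swap]
    exact (hgood y).mem x hx
  · rw [R.edgeColoring_of_mem_children hy]
    exact (hgood x).mem y hy

end Construction

end Rooting

end SimpleGraph

theorem SimpleGraph.IsTree.starChoosable {V : Type*} [Fintype V] {T : SimpleGraph V}
    (hT : T.IsTree) {Δ q : ℕ} (hdeg : ∀ v, T.degree v ≤ Δ) (hΔ : Δ ≤ 2 * q + 1) :
    StarChoosable T (Δ + q) := by
  intro L hL
  obtain ⟨R⟩ := hT.nonempty_rooting
  obtain ⟨col, F, hgood⟩ := R.exists_forall_isGoodFan L hdeg hΔ hL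
  exact ⟨R.edgeColoring col, R.edgeColoring_mem L hgood, R.isStarEdgeColoring hT hgood⟩

theorem stmt_3 {V : Type*} [Fintype V] (T : SimpleGraph V) (hT : T.IsTree) :
    listStarChromaticIndex T ≤ 3 * T.maxDegree / 2 := by
  have h := hT.starChoosable T.degree_le_maxDegree (q := T.maxDegree / 2) (by omega)
  rw [show T.maxDegree + T.maxDegree / 2 = 3 * T.maxDegree / 2 by omega] at h
  exact Nat.sInf_le h
end

section
/- For every positive integer Δ there exists a tree T with maximum degree Δ such that the star chromatic index of T equals ⌊3Δ/2⌋. -/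
/-!
The extremal tree has a root with `Δ` children, each of which has `Δ - 1` leaves. In a star edge
colouring, say that child `i` sees child `i'` if some leaf edge at `i` has the colour of the root
edge at `i'`. Two children cannot see each other, since the path leaf, `i`, root, `i'`, leaf would
then be bichromatic. Hence some child `i` sees `s < Δ / 2` others, so at most `s` of its `Δ - 1`
leaf edges reuse one of the `Δ` root colours, and at least `2Δ - 1 - s ≥ ⌊3Δ/2⌋` colours occur.

Conversely, colour the root edges `0, …, Δ - 1` and give the leaf edges at child `i` the
`⌊Δ/2⌋` colours `Δ, …, Δ + ⌊Δ/2⌋ - 1` together with the root colours `i + 1, …, i + ⌈Δ/2⌉ - 1`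
(mod `Δ`). Two cyclic shifts by less than `Δ / 2` cannot add up to `Δ`, so no two children see
each other, and in a tree of depth two this is the only way a path with four edges could be
bichromatic.
-/

open SimpleGraph
open scoped Classical

open Finset

section StarEdgeColoring

variable {V : Type*} {G : SimpleGraph V} {φ : Sym2 V → ℕ}

lemma IsStarEdgeColoring.ne_of_adj (hφ : IsStarEdgeColoring G φ) {v x y : V}
    (hx : G.Adj v x) (hy : G.Adj v y) (hxy : x ≠ y) : φ s(v, x) ≠ φ s(v, y) :=
  hφ.1 _ hx _ hy
    ⟨fun h => hxy (Sym2.congr_right.1 h), v, Sym2.mem_mk_left _ _, Sym2.mem_mk_left _ _⟩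

lemma IsStarEdgeColoring.not_alternating (hφ : IsStarEdgeColoring G φ) {x₀ x₁ x₂ x₃ x₄ : V}
    (h₀₁ : G.Adj x₀ x₁) (h₁₂ : G.Adj x₁ x₂) (h₂₃ : G.Adj x₂ x₃) (h₃₄ : G.Adj x₃ x₄)
    (hnd : [x₀, x₁, x₂, x₃, x₄].Nodup) :
    ¬ (φ s(x₀, x₁) = φ s(x₂, x₃) ∧ φ s(x₁, x₂) = φ s(x₃, x₄)) := by
  rintro ⟨h₀₂, h₁₃⟩
  let p : G.Walk x₀ x₄ := .cons h₀₁ (.cons h₁₂ (.cons h₂₃ (.cons h₃₄ .nil)))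
  refine hφ.2.1 _ _ p (by simpa [Walk.isPath_def, p] using hnd) rfl
    ⟨φ s(x₂, x₃), φ s(x₃, x₄), ?_⟩
  simp [p, h₀₂, h₁₃]

lemma isStarEdgeColoring_of_isAcyclic (hG : G.IsAcyclic)
    (hproper : ∀ ⦃v x y⦄, G.Adj v x → G.Adj v y → x ≠ y → φ s(v, x) ≠ φ s(v, y))
    (halt : ∀ ⦃x₀ x₁ x₂ x₃ x₄⦄, G.Adj x₀ x₁ → G.Adj x₁ x₂ → G.Adj x₂ x₃ → G.Adj x₃ x₄ →
      x₀ ≠ x₂ → x₁ ≠ x₃ → x₂ ≠ x₄ → φ s(x₀, x₁) = φ s(x₂, x₃) → φ s(x₁, x₂) ≠ φ s(x₃, x₄)) :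
    IsStarEdgeColoring G φ := by
  refine ⟨?_, ?_, fun u p hp _ => (hG p hp).elim⟩
  · rintro e₁ he₁ e₂ he₂ ⟨hne, v, hv₁, hv₂⟩
    obtain ⟨x, rfl⟩ : ∃ x, e₁ = s(v, x) := ⟨_, (Sym2.other_spec hv₁).symm⟩
    obtain ⟨y, rfl⟩ : ∃ y, e₂ = s(v, y) := ⟨_, (Sym2.other_spec hv₂).symm⟩
    exact hproper he₁ he₂ fun h => hne (by rw [h])
  · rintro u v p hp hlen ⟨c₁, c₂, hc⟩
    rcases p with _ | ⟨h₀₁, _ | ⟨h₁₂, _ | ⟨h₂₃, _ | ⟨h₃₄, _ | ⟨_, _⟩⟩⟩⟩⟩ <;>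
      simp only [Walk.length_cons, Walk.length_nil] at hlen <;> try omega
    simp only [Walk.isPath_def, Walk.support_cons, Walk.support_nil, List.nodup_cons,
      List.mem_cons, List.not_mem_nil] at hp
    simp only [Walk.edges_cons, Walk.edges_nil, List.mem_cons, List.not_mem_nil] at hc
    have h₀₂ := hproper h₀₁.symm h₁₂ (by tauto)
    have h₁₃ := hproper h₁₂.symm h₂₃ (by tauto)
    have h₂₄ := hproper h₂₃.symm h₃₄ (by tauto)
    rw [Sym2.eq_swap] at h₀₂ h₁₃ h₂₄
    have hc₁ := hc _ (.inl rfl)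
    have hc₂ := hc _ (.inr (.inl rfl))
    have hc₃ := hc _ (.inr (.inr (.inl rfl)))
    have hc₄ := hc _ (.inr (.inr (.inr (.inl rfl))))
    -- two colours on a properly coloured path must alternate
    exact halt h₀₁ h₁₂ h₂₃ h₃₄ (by tauto) (by tauto) (by tauto) (by omega) (by omega)

lemma starChromaticIndex_eq {k : ℕ} (hk : StarColorable G k)
    (hlt : ∀ m < k, ¬ StarColorable G m) : starChromaticIndex G = k :=
  le_antisymm (Nat.sInf_le hk) (le_csInf ⟨k, hk⟩ fun m hm => not_lt.1 fun h => hlt m h hm)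

end StarEdgeColoring

lemma exists_two_mul_card_filter_lt {α : Type*} [Fintype α] [Nonempty α] (r : α → α → Prop)
    [DecidableRel r] (hr : ∀ a b, r a b → ¬ r b a) :
    ∃ a, 2 * #{b | r a b} < Fintype.card α := by
  by_contra! h
  set n := Fintype.card α
  set P : Finset (α × α) := {p | r p.1 p.2}
  have hsum : ∑ a, #{b | r a b} = #P := by
    simp only [P, card_filter, Fintype.sum_prod_type]
  have hdisj : Disjoint P (P.image Prod.swap) := by
    simp only [P, Finset.disjoint_left, mem_image, mem_filter, mem_univ, true_and]
    rintro ⟨a, b⟩ hab ⟨⟨c, d⟩, hcd, he⟩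
    simp only [Prod.swap_prod_mk, Prod.mk.injEq] at he
    obtain ⟨rfl, rfl⟩ := he
    exact hr _ _ hab hcd
  have hoff : P ∪ P.image Prod.swap ⊆ univ.offDiag := by
    intro ⟨a, b⟩
    simp only [P, mem_union, mem_image, mem_filter, mem_univ, true_and, mem_offDiag]
    rintro (hab | ⟨⟨c, d⟩, hcd, he⟩)
    · rintro rfl; exact hr _ _ hab hab
    · simp only [Prod.swap_prod_mk, Prod.mk.injEq] at he
      obtain ⟨rfl, rfl⟩ := he
      rintro rfl; exact hr _ _ hcd hcd
  have hP : #P + #P ≤ n * n - n := by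
    calc #P + #P = #(P ∪ P.image Prod.swap) := by
          rw [card_union_of_disjoint hdisj, card_image_of_injective _ Prod.swap_injective]
      _ ≤ #(univ.offDiag : Finset (α × α)) := card_le_card hoff
      _ = n * n - n := by simp [offDiag_card, n]
  have hn : 0 < n := Fintype.card_pos
  have : n * n ≤ 2 * #P := by
    calc n * n = ∑ _a : α, n := by simp [n]
      _ ≤ ∑ a, 2 * #{b | r a b} := sum_le_sum fun a _ => h a
      _ = 2 * #P := by rw [← mul_sum, hsum]
  have : n ≤ n * n := Nat.le_mul_self n
  omega

namespace DepthTwoTree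

abbrev Vertex (Δ : ℕ) : Type := Option (Fin Δ × Option (Fin (Δ - 1)))

variable {Δ : ℕ}

def root : Vertex Δ := none
def child (i : Fin Δ) : Vertex Δ := some (i, none)
def leaf (i : Fin Δ) (j : Fin (Δ - 1)) : Vertex Δ := some (i, some j)

@[simp] lemma root_ne_child (i : Fin Δ) : root ≠ child i := by simp [root, child]
@[simp] lemma child_ne_root (i : Fin Δ) : child i ≠ root := by simp [root, child]
@[simp] lemma root_ne_leaf (i : Fin Δ) (j : Fin (Δ - 1)) : root ≠ leaf i j := by simp [root, leaf]
@[simp] lemma leaf_ne_root (i : Fin Δ) (j : Fin (Δ - 1)) : leaf i j ≠ root := by simp [root, leaf]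
@[simp] lemma child_ne_leaf (i i' : Fin Δ) (j : Fin (Δ - 1)) : child i ≠ leaf i' j := by
  simp [child, leaf]
@[simp] lemma leaf_ne_child (i i' : Fin Δ) (j : Fin (Δ - 1)) : leaf i j ≠ child i' := by
  simp [child, leaf]
@[simp] lemma child_inj {i i' : Fin Δ} : child i = child i' ↔ i = i' := by simp [child]
@[simp] lemma leaf_inj {i i' : Fin Δ} {j j' : Fin (Δ - 1)} :
    leaf i j = leaf i' j' ↔ i = i' ∧ j = j' := by simp [leaf]

variable (Δ) in
def graph : SimpleGraph (Vertex Δ) :=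
  fromRel fun x y => (∃ i, x = root ∧ y = child i) ∨ ∃ i j, x = child i ∧ y = leaf i j

lemma graph_adj {x y : Vertex Δ} : (graph Δ).Adj x y ↔
    (∃ i, x = root ∧ y = child i) ∨ (∃ i, x = child i ∧ y = root) ∨
    (∃ i j, x = child i ∧ y = leaf i j) ∨ (∃ i j, x = leaf i j ∧ y = child i) := by
  simp only [graph, fromRel_adj]
  constructor
  · rintro ⟨-, (⟨i, rfl, rfl⟩ | ⟨i, j, rfl, rfl⟩) | (⟨i, rfl, rfl⟩ | ⟨i, j, rfl, rfl⟩)⟩ <;>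
      simp
  · rintro (⟨i, rfl, rfl⟩ | ⟨i, rfl, rfl⟩ | ⟨i, j, rfl, rfl⟩ | ⟨i, j, rfl, rfl⟩) <;> simp

lemma adj_root_child (i : Fin Δ) : (graph Δ).Adj root (child i) := graph_adj.2 (by simp)

lemma adj_child_leaf (i : Fin Δ) (j : Fin (Δ - 1)) : (graph Δ).Adj (child i) (leaf i j) :=
  graph_adj.2 (by simp)

lemma neighborFinset_root : (graph Δ).neighborFinset root = univ.image child := by
  ext x
  simp only [mem_neighborFinset, graph_adj, mem_image, mem_univ, true_and]
  constructor
  · rintro (⟨i, -, rfl⟩ | ⟨i, h, -⟩ | ⟨i, j, h, -⟩ | ⟨i, j, h, -⟩) <;> simp_all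
  · rintro ⟨i, rfl⟩
    simp

lemma neighborFinset_child (i : Fin Δ) :
    (graph Δ).neighborFinset (child i) = insert root (univ.image (leaf i)) := by
  ext x
  simp only [mem_neighborFinset, graph_adj, mem_insert, mem_image, mem_univ, true_and]
  constructor
  · rintro (⟨i', h, -⟩ | ⟨i', -, rfl⟩ | ⟨i', j, h, rfl⟩ | ⟨i', j, h, -⟩) <;> simp_all
  · rintro (rfl | ⟨j, rfl⟩) <;> simp

lemma neighborFinset_leaf (i : Fin Δ) (j : Fin (Δ - 1)) :
    (graph Δ).neighborFinset (leaf i j) = {child i} := by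
  ext x
  simp only [mem_neighborFinset, graph_adj, mem_singleton]
  constructor
  · rintro (⟨i', h, -⟩ | ⟨i', h, -⟩ | ⟨i', j', h, -⟩ | ⟨i', j', h, rfl⟩) <;> simp_all
  · rintro rfl
    simp

lemma degree_root : (graph Δ).degree root = Δ := by
  rw [← card_neighborFinset_eq_degree, neighborFinset_root,
    card_image_of_injective _ fun _ _ => child_inj.1, card_univ, Fintype.card_fin]

lemma degree_child (i : Fin Δ) : (graph Δ).degree (child i) = Δ := by
  rw [← card_neighborFinset_eq_degree, neighborFinset_child, card_insert_of_notMem (by simp),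
    card_image_of_injective _ fun _ _ h => (leaf_inj.1 h).2, card_univ, Fintype.card_fin]
  have := i.pos
  omega

lemma degree_leaf (i : Fin Δ) (j : Fin (Δ - 1)) : (graph Δ).degree (leaf i j) = 1 := by
  rw [← card_neighborFinset_eq_degree, neighborFinset_leaf, card_singleton]

lemma maxDegree_eq : (graph Δ).maxDegree = Δ := by
  refine le_antisymm (maxDegree_le_of_forall_degree_le _ _ ?_) ?_
  rintro (_ | ⟨i, _ | j⟩)
  · exact degree_root.le
  · exact (degree_child i).le
  · exact (degree_leaf i j).trans_le i.pos
  · exact degree_root.symm.trans_le (degree_le_maxDegree _ _)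

lemma connected : (graph Δ).Connected := by
  have h : ∀ v : Vertex Δ, (graph Δ).Reachable root v := by
    rintro (_ | ⟨i, _ | j⟩)
    · rfl
    · exact (adj_root_child i).reachable
    · exact (adj_root_child i).reachable.trans (adj_child_leaf i j).reachable
  exact (connected_iff_exists_forall_reachable _).2 ⟨root, h⟩

lemma card_edgeFinset : #(graph Δ).edgeFinset = Δ * Δ := by
  have hsum := (graph Δ).sum_degrees_eq_twice_card_edges
  simp only [Fintype.sum_option, Fintype.sum_prod_type] at hsum
  change (graph Δ).degree root +
    ∑ i, ((graph Δ).degree (child i) + ∑ j, (graph Δ).degree (leaf i j)) = _ at hsum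
  simp only [degree_root, degree_child, degree_leaf, sum_const, card_univ, Fintype.card_fin,
    smul_eq_mul, mul_one] at hsum
  rcases Nat.eq_zero_or_eq_succ_pred Δ with rfl | h
  · simpa using hsum
  · rw [h] at hsum ⊢
    simp only [Nat.succ_sub_one] at hsum
    nlinarith

lemma isTree : (graph Δ).IsTree := by
  refine isTree_iff_connected_and_card.2 ⟨connected, ?_⟩
  rw [Nat.card_eq_fintype_card, ← edgeFinset_card, card_edgeFinset, Nat.card_eq_fintype_card]
  simp only [Fintype.card_option, Fintype.card_prod, Fintype.card_fin]
  rcases Δ with _ | n <;> rfl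

variable (Δ) in
def leafColor (i : Fin Δ) (j : Fin (Δ - 1)) : ℕ :=
  if (j : ℕ) < Δ / 2 then Δ + j
  else if (i : ℕ) + (j - Δ / 2) + 1 < Δ then i + (j - Δ / 2) + 1 else i + (j - Δ / 2) + 1 - Δ

lemma leafColor_lt (i : Fin Δ) (j : Fin (Δ - 1)) : leafColor Δ i j < 3 * Δ / 2 := by
  have := j.isLt
  unfold leafColor
  split_ifs <;> omega

lemma leafColor_ne (i : Fin Δ) (j : Fin (Δ - 1)) : leafColor Δ i j ≠ i := by
  have := j.isLt
  unfold leafColor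
  split_ifs <;> omega

lemma leafColor_injective (i : Fin Δ) : Function.Injective (leafColor Δ i) := by
  intro j j' h
  have := i.isLt
  unfold leafColor at h
  apply Fin.ext
  split_ifs at h <;> omega

lemma leafColor_ne_of_leafColor_eq {i i' : Fin Δ} (j j' : Fin (Δ - 1)) (hii' : i ≠ i')
    (h : leafColor Δ i j = i') : leafColor Δ i' j' ≠ i := by
  have := j.isLt
  have := j'.isLt
  have := i.isLt
  have := i'.isLt
  have := Fin.val_ne_of_ne hii'
  unfold leafColor at h ⊢
  split_ifs at h ⊢ <;> omega

variable (Δ) in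
def downColor : Vertex Δ → Vertex Δ → ℕ
  | none, some (i, none) => i
  | some (_, none), some (i, some j) => leafColor Δ i j
  | _, _ => 0

variable (Δ) in
def starColoring : Sym2 (Vertex Δ) → ℕ :=
  Sym2.lift ⟨fun x y => downColor Δ x y + downColor Δ y x, fun _ _ => Nat.add_comm _ _⟩

@[simp] lemma starColoring_root_child (i : Fin Δ) : starColoring Δ s(root, child i) = i := by
  simp [starColoring, downColor, root, child]

@[simp] lemma starColoring_child_leaf (i : Fin Δ) (j : Fin (Δ - 1)) :
    starColoring Δ s(child i, leaf i j) = leafColor Δ i j := by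
  simp [starColoring, downColor, child, leaf]

@[simp] lemma starColoring_child_root (i : Fin Δ) : starColoring Δ s(child i, root) = i := by
  rw [Sym2.eq_swap, starColoring_root_child]

lemma exists_eq_of_path_four {x₀ x₁ x₂ x₃ x₄ : Vertex Δ} (h₀₁ : (graph Δ).Adj x₀ x₁)
    (h₁₂ : (graph Δ).Adj x₁ x₂) (h₂₃ : (graph Δ).Adj x₂ x₃) (h₃₄ : (graph Δ).Adj x₃ x₄)
    (h₀₂ : x₀ ≠ x₂) (h₁₃ : x₁ ≠ x₃) (h₂₄ : x₂ ≠ x₄) :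
    ∃ i i' j j', i ≠ i' ∧ x₀ = leaf i j ∧ x₁ = child i ∧ x₂ = root ∧ x₃ = child i' ∧
      x₄ = leaf i' j' := by
  rw [graph_adj] at h₀₁ h₁₂ h₂₃ h₃₄
  rcases h₁₂ with ⟨i₁, rfl, rfl⟩ | ⟨i₁, rfl, rfl⟩ | ⟨i₁, j₁, rfl, rfl⟩ | ⟨i₁, j₁, rfl, rfl⟩ <;>
    rcases h₂₃ with ⟨i₂, h, rfl⟩ | ⟨i₂, h, rfl⟩ | ⟨i₂, j₂, h, rfl⟩ | ⟨i₂, j₂, h, rfl⟩ <;>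
    simp_all
  obtain rfl | h := h₃₄
  · exact absurd rfl h₂₄
  · exact h

lemma starColoring_ne {v x y : Vertex Δ} (hx : (graph Δ).Adj v x) (hy : (graph Δ).Adj v y)
    (hxy : x ≠ y) : starColoring Δ s(v, x) ≠ starColoring Δ s(v, y) := by
  rw [graph_adj] at hx hy
  rcases hx with ⟨i, rfl, rfl⟩ | ⟨i, rfl, rfl⟩ | ⟨i, j, rfl, rfl⟩ | ⟨i, j, rfl, rfl⟩ <;>
    rcases hy with ⟨i', h, rfl⟩ | ⟨i', h, rfl⟩ | ⟨i', j', h, rfl⟩ | ⟨i', j', h, rfl⟩ <;>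
    simp_all [leafColor_ne, (leafColor_injective _).eq_iff, Fin.val_inj]
  exact (leafColor_ne _ _).symm

lemma isStarEdgeColoring_starColoring : IsStarEdgeColoring (graph Δ) (starColoring Δ) := by
  refine isStarEdgeColoring_of_isAcyclic isTree.isAcyclic (fun _ _ _ => starColoring_ne) ?_
  intro x₀ x₁ x₂ x₃ x₄ h₀₁ h₁₂ h₂₃ h₃₄ h₀₂ h₁₃ h₂₄
  obtain ⟨i, i', j, j', hii', rfl, rfl, rfl, rfl, rfl⟩ :=
    exists_eq_of_path_four h₀₁ h₁₂ h₂₃ h₃₄ h₀₂ h₁₃ h₂₄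
  rw [Sym2.eq_swap, starColoring_child_leaf, starColoring_child_root, starColoring_root_child,
    starColoring_child_leaf]
  exact fun h => (leafColor_ne_of_leafColor_eq j j' hii' h).symm

lemma starColorable : StarColorable (graph Δ) (3 * Δ / 2) := by
  refine ⟨starColoring Δ, fun e he => ?_, isStarEdgeColoring_starColoring⟩
  have hi (i : Fin Δ) : (i : ℕ) < 3 * Δ / 2 := by omega
  induction e using Sym2.ind with
  | _ x y =>
    rcases graph_adj.1 he with
      ⟨i, rfl, rfl⟩ | ⟨i, rfl, rfl⟩ | ⟨i, j, rfl, rfl⟩ | ⟨i, j, rfl, rfl⟩ <;>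
      simp [hi, leafColor_lt, Sym2.eq_swap (a := leaf _ _)]

lemma not_starColorable_of_lt {k : ℕ} (hk : k < 3 * Δ / 2) : ¬ StarColorable (graph Δ) k := by
  rintro ⟨φ, hφk, hφ⟩
  have : Nonempty (Fin Δ) := ⟨⟨0, by omega⟩⟩
  let a : Fin Δ → ℕ := fun i => φ s(root, child i)
  let b : Fin Δ → Fin (Δ - 1) → ℕ := fun i j => φ s(child i, leaf i j)
  let sees : Fin Δ → Fin Δ → Prop := fun i i' => i ≠ i' ∧ ∃ j, b i j = a i'
  obtain ⟨i, hi⟩ := exists_two_mul_card_filter_lt sees fun i i' ⟨hii', j, hj⟩ ⟨_, j', hj'⟩ => by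
      refine hφ.not_alternating (adj_child_leaf i j).symm (adj_root_child i).symm
        (adj_root_child i') (adj_child_leaf i' j') (by simp [hii']) ⟨?_, ?_⟩
      · rw [Sym2.eq_swap]; exact hj
      · rw [Sym2.eq_swap]; exact hj'.symm
  set A := univ.image a
  set B := univ.image (b i)
  have hA : #A = Δ := by
    rw [card_image_of_injective, card_univ, Fintype.card_fin]
    intro i₁ i₂ h
    by_contra hne
    exact hφ.ne_of_adj (adj_root_child i₁) (adj_root_child i₂) (by simpa) h
  have hB : #B = Δ - 1 := by
    rw [card_image_of_injective, card_univ, Fintype.card_fin]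
    intro j₁ j₂ h
    by_contra hne
    exact hφ.ne_of_adj (adj_child_leaf i j₁) (adj_child_leaf i j₂) (by simpa) h
  have hAB : A ∪ B ⊆ range k := by
    simp only [A, B, union_subset_iff, image_subset_iff, mem_range, mem_univ, forall_const]
    exact ⟨fun i' => hφk _ (adj_root_child i'), fun j => hφk _ (adj_child_leaf i j)⟩
  have hAiB : A ∩ B ⊆ ({i' | sees i i'} : Finset (Fin Δ)).image a := by
    intro x hx
    simp only [A, B, mem_inter, mem_image, mem_univ, true_and] at hx
    obtain ⟨⟨i', rfl⟩, j, hj⟩ := hx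
    refine mem_image.2 ⟨i', mem_filter.2 ⟨mem_univ _, ?_, j, hj⟩, rfl⟩
    rintro rfl
    exact hφ.ne_of_adj (adj_child_leaf i j) (adj_root_child i).symm (by simp)
      (hj.trans (congrArg φ Sym2.eq_swap))
  have := card_union_add_card_inter A B
  have := card_le_card hAB
  have := (card_le_card hAiB).trans card_image_le
  simp only [card_range, Fintype.card_fin] at *
  omega

theorem starChromaticIndex_graph : starChromaticIndex (graph Δ) = 3 * Δ / 2 :=
  starChromaticIndex_eq starColorable fun _ => not_starColorable_of_lt

end DepthTwoTree

theorem stmt_5_general (Δ : ℕ) :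
    ∃ (V : Type) (_ : Fintype V) (T : SimpleGraph V),
      T.IsTree ∧ T.maxDegree = Δ ∧ starChromaticIndex T = 3 * Δ / 2 :=
  ⟨_, inferInstance, DepthTwoTree.graph Δ, DepthTwoTree.isTree, DepthTwoTree.maxDegree_eq,
    DepthTwoTree.starChromaticIndex_graph⟩

theorem stmt_5 (Δ : ℕ) (hΔ : 0 < Δ) :
    ∃ (V : Type) (_ : Fintype V) (T : SimpleGraph V),
      T.IsTree ∧ T.maxDegree = Δ ∧ starChromaticIndex T = 3 * Δ / 2 :=
  stmt_5_general Δ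
end

section
/- If C is a cycle of length n with n ≥ 3 and n ≠ 5, then the list star chromatic index of C equals 3. -/
open SimpleGraph
open scoped Classical

/-
A star edge colouring of `C_n` is a cyclic sequence of colours `c : Fin n → ℕ` (edge `{j, j+1}`
gets `c j`) in which consecutive terms differ and no four consecutive terms read `a b a b`: a
trail in `C_n` runs around the cycle in one direction, so its edges are consecutive.

Two colours never suffice: on `C_3` they are not even proper, on `C_4` they make the cycle itself
bichromatic, and on longer cycles any path of length four.

For lists of size three: if all lists are equal, give edge `k` the colour number
`k + min (k - m) b (mod 3)` of the list, where `b = 2 (n mod 3)` and `m = n - b`. The colours step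
forward around `ℤ/3` and then backward for the last `b` steps, so the sequence closes up since
`m - b ≡ 0 (mod 3)`, and `a b a b` would need a step whose direction differs from both
neighbours, which does not happen as long as `m ≥ 2`, i.e. `n ≠ 5`. Otherwise rotate so that the
first two lists differ, colour the positions `2, …, n-1` greedily with any three consecutive
colours distinct, and choose the first two colours last; the lists being different leaves room
for them. The cycles `C_3` and `C_4` are coloured by hand.
-/

open Finset Fin.NatCast

lemma Finset.exists_mem_ne_ne {α : Type*} {s : Finset α} (hs : 3 ≤ #s) (a b : α) :
    ∃ z ∈ s, z ≠ a ∧ z ≠ b := by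
  obtain ⟨z, hz, hzab⟩ := exists_mem_notMem_of_card_lt_card (card_le_two.trans_lt hs)
  exact ⟨z, hz, by simpa [not_or] using hzab⟩

section CycleSequence

variable {α : Type*}

def StarWindow (a b c d : α) : Prop := a ≠ b ∧ ¬(a = c ∧ b = d)

lemma StarWindow.of_ne {a b c d : α} (hab : a ≠ b) (hac : a ≠ c) : StarWindow a b c d :=
  ⟨hab, fun h => hac h.1⟩

def IsStarCycleColoring {n : ℕ} [NeZero n] (c : Fin n → α) : Prop :=
  ∀ j, StarWindow (c j) (c (j + 1)) (c (j + 2)) (c (j + 3))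

lemma exists_seq_mem_ne (L : ℕ → Finset α) (hL : ∀ k, 3 ≤ #(L k)) :
    ∃ g : ℕ → α, ∀ k, g k ∈ L k ∧ g (k + 1) ≠ g k ∧ g (k + 2) ≠ g k := by
  choose pick hpick using fun k => exists_mem_ne_ne (hL k)
  obtain ⟨a₀, ha₀⟩ := card_pos.mp (three_pos.trans_le (hL 0))
  let q : ℕ → α × α := fun k => Nat.rec (a₀, pick 1 a₀ a₀)
    (fun k p => (p.2, pick (k + 2) p.1 p.2)) k
  refine ⟨fun k => (q k).1, fun k => ⟨?_, ?_, (hpick _ _ _).2.1⟩⟩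
  · rcases k with _ | _ | k
    exacts [ha₀, (hpick _ _ _).1, (hpick _ _ _).1]
  · rcases k with _ | k
    exacts [(hpick _ _ _).2.1, (hpick _ _ _).2.2]

/-- Room to close up the cycle `…, w, x, y, u, v, …`: these conditions make every window
through `x` or `y` a star window. -/
lemma exists_closing_pair {A B : Finset α} (hA : 3 ≤ #A) (hB : 3 ≤ #B) (hAB : A ≠ B)
    (u v w : α) : ∃ x ∈ A, ∃ y ∈ B, x ≠ y ∧ y ≠ u ∧ x ≠ w ∧ y ≠ w ∧ ¬(x = u ∧ y = v) := by
  by_cases hBuvw : B ⊆ {u, v, w}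
  · have hAuvw : ¬A ⊆ {u, v, w} := fun h => hAB <|
      (eq_of_subset_of_card_le h (card_le_three.trans hA)).trans
        (eq_of_subset_of_card_le hBuvw (card_le_three.trans hB)).symm
    obtain ⟨x, hx, hxuvw⟩ := not_subset.mp hAuvw
    obtain ⟨y, hy, hyu, hyw⟩ := exists_mem_ne_ne hB u w
    have hyv : y = v := by simpa [hyu, hyw] using hBuvw hy
    simp only [mem_insert, mem_singleton, not_or] at hxuvw
    exact ⟨x, hx, y, hy, hyv ▸ hxuvw.2.1, hyu, hxuvw.2.2, hyw, fun h => hxuvw.1 h.1⟩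
  · obtain ⟨y, hy, hyuvw⟩ := not_subset.mp hBuvw
    simp only [mem_insert, mem_singleton, not_or] at hyuvw
    obtain ⟨x, hx, hxw, hxy⟩ := exists_mem_ne_ne hA w y
    exact ⟨x, hx, y, hy, hxy, hyuvw.1, hxw, hyuvw.2.2, fun h => hyuvw.2.1 h.2⟩

/-- The cyclic sequence `x, y, g 2, …, g (n-1)`, unrolled up to index `n + 2`, the furthest a
window starting below `n` reads. -/
def closedSeq (n : ℕ) (x y : α) (g : ℕ → α) (k : ℕ) : α :=
  if k = 0 ∨ k = n then x else if k = 1 ∨ k = n + 1 then y else if k = n + 2 then g 2 else g k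

section ClosedSeq

variable {n : ℕ} {x y : α} {g : ℕ → α}

lemma closedSeq_zero : closedSeq n x y g 0 = x := if_pos (by omega)

lemma closedSeq_self : closedSeq n x y g n = x := if_pos (by omega)

lemma closedSeq_one (hn : 2 ≤ n) : closedSeq n x y g 1 = y :=
  (if_neg (by omega)).trans (if_pos (by omega))

lemma closedSeq_self_add_one : closedSeq n x y g (n + 1) = y :=
  (if_neg (by omega)).trans (if_pos (by omega))

lemma closedSeq_self_add_two : closedSeq n x y g (n + 2) = g 2 :=
  (if_neg (by omega)).trans ((if_neg (by omega)).trans (if_pos rfl))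

lemma closedSeq_of_two_le {k : ℕ} (h2 : 2 ≤ k) (hk : k < n) : closedSeq n x y g k = g k :=
  (if_neg (by omega)).trans ((if_neg (by omega)).trans (if_neg (by omega)))

end ClosedSeq

variable {n : ℕ} [NeZero n]

lemma IsStarCycleColoring.comp_add_right {c : Fin n → α} (hc : IsStarCycleColoring c)
    (r : Fin n) : IsStarCycleColoring fun j => c (j + r) := by
  intro j
  simpa only [add_right_comm _ r] using hc (j + r)

lemma IsStarCycleColoring.comp {β : Type*} {c : Fin n → α} (hc : IsStarCycleColoring c)
    {g : α → β} (hg : Function.Injective g) : IsStarCycleColoring (g ∘ c) := by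
  intro j
  simpa only [StarWindow, Function.comp_apply, hg.ne_iff, hg.eq_iff] using hc j

lemma IsStarCycleColoring.not_bichromatic {c : Fin n → α} (hc : IsStarCycleColoring c)
    (t : Fin n) (γ₁ γ₂ : α) : ¬∀ i < 4, c (t + (i : ℕ)) = γ₁ ∨ c (t + (i : ℕ)) = γ₂ := by
  intro h
  have h₀ := h 0 (by norm_num)
  have h₁ := h 1 (by norm_num)
  have h₂ := h 2 (by norm_num)
  have h₃ := h 3 (by norm_num)
  simp only [Nat.cast_zero, add_zero, Nat.cast_one, Nat.cast_ofNat] at h₀ h₁ h₂ h₃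
  obtain ⟨hne₀, hstar⟩ := hc t
  have hne₁ := (hc (t + 1)).1
  have hne₂ := (hc (t + 2)).1
  rw [add_assoc, one_add_one_eq_two] at hne₁
  rw [add_assoc, show (2 : Fin n) + 1 = 3 by norm_num] at hne₂
  rcases h₀ with h₀ | h₀ <;> rcases h₁ with h₁ | h₁ <;> rcases h₂ with h₂ | h₂ <;>
    rcases h₃ with h₃ | h₃ <;> simp_all

lemma isStarCycleColoring_of_nat {F : ℕ → α} (hn : 3 ≤ n)
    (hwin : ∀ j < n, StarWindow (F j) (F (j + 1)) (F (j + 2)) (F (j + 3)))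
    (hper : ∀ k < 3, F (n + k) = F k) :
    IsStarCycleColoring fun j : Fin n => F j := by
  have hF : ∀ (j : Fin n) (r : ℕ), r ≤ 3 → F ↑(j + (r : Fin n)) = F (j.val + r) := by
    intro j r hr
    rw [Fin.val_add, Fin.val_natCast, Nat.add_mod_mod]
    rcases Nat.lt_or_ge (j + r) n with h | h
    · rw [Nat.mod_eq_of_lt h]
    · obtain ⟨k, hk⟩ : ∃ k : ℕ, j.val + r = n + k := ⟨j + r - n, by omega⟩
      rw [hk, Nat.add_mod_left, Nat.mod_eq_of_lt (by omega), hper k (by omega)]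
  intro j
  have h₁ := hF j 1 (by norm_num)
  have h₂ := hF j 2 (by norm_num)
  have h₃ := hF j 3 le_rfl
  simp only [Nat.cast_one, Nat.cast_ofNat] at h₁ h₂ h₃
  simpa only [h₁, h₂, h₃] using hwin j j.isLt

lemma exists_isStarCycleColoring_fin_three (hn : 3 ≤ n) (hn5 : n ≠ 5) :
    ∃ p : Fin n → Fin 3, IsStarCycleColoring p := by
  obtain ⟨b, hb⟩ : ∃ b, b = 2 * (n % 3) := ⟨_, rfl⟩
  obtain ⟨m, hm⟩ : ∃ m, m + b = n := ⟨n - b, by omega⟩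
  let F : ℕ → Fin 3 := fun k => ((k + min (k - m) b : ℕ) : Fin 3)
  refine ⟨fun j => F j, isStarCycleColoring_of_nat hn (fun j hj => ?_) (fun k hk => ?_)⟩
  · simp only [F, StarWindow, ne_eq, Fin.ext_iff, Fin.val_natCast]
    omega
  · simp only [F, Nat.sub_eq_zero_of_le (show k ≤ m by omega),
      show n + k - m = b + k by omega, Fin.ext_iff, Fin.val_natCast]
    omega

lemma isStarCycleColoring_closedSeq {x y : α} {g : ℕ → α} (hn : 5 ≤ n)
    (hg : ∀ k, g (k + 1) ≠ g k ∧ g (k + 2) ≠ g k) (hxy : x ≠ y) (hy2 : y ≠ g 2)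
    (hxw : x ≠ g (n - 1)) (hyw : y ≠ g (n - 1))
    (hx2y3 : ¬(x = g 2 ∧ y = g 3)) : IsStarCycleColoring fun j : Fin n => closedSeq n x y g j := by
  have hg' : ∀ k, 2 ≤ k → k < n → closedSeq n x y g k = g k := fun k => closedSeq_of_two_le
  refine isStarCycleColoring_of_nat (by omega) (fun j hj => ?_) fun k hk => ?_
  · rcases Nat.lt_or_ge (j + 3) n with hj3 | hj3
    · rcases j with _ | _ | j
      · rw [closedSeq_zero, closedSeq_one (by omega), hg' 2 le_rfl (by omega), hg' 3 (by omega) hj3]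
        exact ⟨hxy, hx2y3⟩
      · rw [closedSeq_one (by omega), hg' 2 le_rfl (by omega), hg' 3 (by omega) (by omega),
          hg' 4 (by omega) hj3]
        exact ⟨hy2, fun h => (hg 2).2 h.2.symm⟩
      · rw [hg' (j + 2) (by omega) (by omega), hg' (j + 2 + 1) (by omega) (by omega),
          hg' (j + 2 + 2) (by omega) (by omega), hg' (j + 2 + 3) (by omega) hj3]
        exact .of_ne (hg (j + 2)).1.symm (hg (j + 2)).2.symm
    obtain rfl | rfl | rfl : j = n - 3 ∨ j = n - 2 ∨ j = n - 1 := by omega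
    · have h := hg (n - 3)
      rw [show n - 3 + 1 = n - 2 by omega, show n - 3 + 2 = n - 1 by omega] at h ⊢
      rw [show n - 3 + 3 = n by omega, hg' (n - 3) (by omega) (by omega),
        hg' (n - 2) (by omega) (by omega), hg' (n - 1) (by omega) (by omega), closedSeq_self]
      exact .of_ne h.1.symm h.2.symm
    · have h := (hg (n - 2)).1
      rw [show n - 2 + 1 = n - 1 by omega] at h ⊢
      rw [show n - 2 + 2 = n by omega, show n - 2 + 3 = n + 1 by omega,
        hg' (n - 2) (by omega) (by omega), hg' (n - 1) (by omega) (by omega), closedSeq_self,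
        closedSeq_self_add_one]
      exact ⟨h.symm, fun h => hyw h.2.symm⟩
    · rw [show n - 1 + 1 = n by omega, show n - 1 + 2 = n + 1 by omega,
        show n - 1 + 3 = n + 2 by omega, hg' (n - 1) (by omega) (by omega), closedSeq_self,
        closedSeq_self_add_one, closedSeq_self_add_two]
      exact ⟨hxw.symm, fun h => hyw h.1.symm⟩
  · interval_cases k
    · rw [add_zero, closedSeq_self, closedSeq_zero]
    · rw [closedSeq_self_add_one, closedSeq_one (by omega)]
    · rw [closedSeq_self_add_two, hg' 2 le_rfl (by omega)]

lemma exists_isStarCycleColoring_of_ne (hn : 5 ≤ n) {L : Fin n → Finset α}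
    (hL : ∀ j, 3 ≤ #(L j)) (h01 : L 0 ≠ L 1) :
    ∃ c : Fin n → α, (∀ j, c j ∈ L j) ∧ IsStarCycleColoring c := by
  obtain ⟨g, hg⟩ := exists_seq_mem_ne (fun k : ℕ => L k) (fun k => hL _)
  obtain ⟨x, hx, y, hy, hxy, hy2, hxw, hyw, hx2y3⟩ :=
    exists_closing_pair (hL 0) (hL 1) h01 (g 2) (g 3) (g (n - 1))
  refine ⟨fun j => closedSeq n x y g j, fun j => ?_,
    isStarCycleColoring_closedSeq hn (fun k => (hg k).2) hxy hy2 hxw hyw hx2y3⟩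
  obtain ⟨k, hk, rfl⟩ : ∃ k < n, (k : Fin n) = j := ⟨j, j.isLt, Fin.cast_val_eq_self j⟩
  simp only [Fin.val_natCast, Nat.mod_eq_of_lt hk]
  rcases k with _ | _ | k
  · simpa [closedSeq_zero] using hx
  · simpa [closedSeq_one (n := n) (by omega)] using hy
  · rw [closedSeq_of_two_le (by omega) hk]
    exact (hg (k + 2)).1

lemma exists_isStarCycleColoring_three {L : Fin 3 → Finset α} (hL : ∀ j, 3 ≤ #(L j)) :
    ∃ c : Fin 3 → α, (∀ j, c j ∈ L j) ∧ IsStarCycleColoring c := by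
  obtain ⟨x₀, hx₀⟩ := card_pos.mp (three_pos.trans_le (hL 0))
  obtain ⟨x₁, hx₁, hx₁₀, -⟩ := exists_mem_ne_ne (hL 1) x₀ x₀
  obtain ⟨x₂, hx₂, hx₂₀, hx₂₁⟩ := exists_mem_ne_ne (hL 2) x₀ x₁
  refine ⟨![x₀, x₁, x₂], fun j => ?_, fun j => ?_⟩ <;> fin_cases j <;>
    simp_all [StarWindow, eq_comm]

lemma exists_isStarCycleColoring_four {L : Fin 4 → Finset α} (hL : ∀ j, 3 ≤ #(L j)) :
    ∃ c : Fin 4 → α, (∀ j, c j ∈ L j) ∧ IsStarCycleColoring c := by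
  obtain ⟨x₀, hx₀⟩ := card_pos.mp (three_pos.trans_le (hL 0))
  obtain ⟨x₂, hx₂, hx₂₀, -⟩ := exists_mem_ne_ne (hL 2) x₀ x₀
  obtain ⟨x₁, hx₁, hx₁₀, hx₁₂⟩ := exists_mem_ne_ne (hL 1) x₀ x₂
  obtain ⟨x₃, hx₃, hx₃₀, hx₃₂⟩ := exists_mem_ne_ne (hL 3) x₀ x₂
  refine ⟨![x₀, x₁, x₂, x₃], fun j => ?_, fun j => ?_⟩ <;> fin_cases j <;>
    simp_all [StarWindow, eq_comm]

theorem exists_isStarCycleColoring (hn : 3 ≤ n) (hn5 : n ≠ 5) {L : Fin n → Finset α}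
    (hL : ∀ j, 3 ≤ #(L j)) : ∃ c : Fin n → α, (∀ j, c j ∈ L j) ∧ IsStarCycleColoring c := by
  obtain rfl | rfl | hn6 : n = 3 ∨ n = 4 ∨ 6 ≤ n := by omega
  · exact exists_isStarCycleColoring_three hL
  · exact exists_isStarCycleColoring_four hL
  by_cases hconst : ∀ j, L j = L 0
  · obtain ⟨p, hp⟩ := exists_isStarCycleColoring_fin_three hn hn5
    obtain ⟨a, ha, b, hb, c, hc, hab, hac, hbc⟩ := two_lt_card.mp (hL 0)
    refine ⟨![a, b, c] ∘ p, fun j => ?_, hp.comp fun i k hik => ?_⟩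
    · rw [hconst j, Function.comp_apply]
      generalize p j = i
      fin_cases i <;> assumption
    · fin_cases i <;> fin_cases k <;> simp_all [eq_comm]
  obtain ⟨r, hr⟩ : ∃ r, L r ≠ L (r + 1) := by
    by_contra! h
    have hL0 : ∀ k : ℕ, L k = L 0 := fun k => by
      induction k with
      | zero => simp
      | succ k ih => rw [Nat.cast_succ, ← h, ih]
    exact hconst fun j => by simpa using hL0 j
  obtain ⟨c, hcL, hc⟩ := exists_isStarCycleColoring_of_ne (by omega)
    (L := fun j => L (j + r)) (fun j => hL _) (by simpa [add_comm] using hr)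
  exact ⟨fun j => c (j - r), fun j => by simpa using hcL (j - r),
    by simpa [sub_eq_add_neg] using hc.comp_add_right (-r)⟩

end CycleSequence

namespace SimpleGraph

variable {n : ℕ}

lemma cycleGraph_adj_iff {u v : Fin (n + 2)} :
    (cycleGraph (n + 2)).Adj u v ↔ v = u + 1 ∨ u = v + 1 := by
  rw [cycleGraph_adj, sub_eq_iff_eq_add, sub_eq_iff_eq_add, add_comm 1 v, add_comm 1 u, or_comm]

lemma cycleGraph_edge_mem (j : Fin (n + 2)) : s(j, j + 1) ∈ (cycleGraph (n + 2)).edgeSet :=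
  cycleGraph_adj_iff.mpr (.inl rfl)

lemma cycleGraph_exists_eq_of_mem_edgeSet {e : Sym2 (Fin (n + 2))}
    (he : e ∈ (cycleGraph (n + 2)).edgeSet) : ∃ j, e = s(j, j + 1) := by
  induction e using Sym2.inductionOn with
  | hf u v =>
    rw [mem_edgeSet, cycleGraph_adj_iff] at he
    rcases he with rfl | rfl
    exacts [⟨u, rfl⟩, ⟨v, Sym2.eq_swap⟩]

lemma cycleGraph_edge_injective : Function.Injective fun j : Fin (n + 3) => s(j, j + 1) := by
  intro j k hjk
  rcases Sym2.eq_iff.mp hjk with ⟨h, -⟩ | ⟨h₁, h₂⟩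
  · exact h
  · have h := h₁ ▸ h₂
    rw [add_assoc, add_eq_left, Fin.ext_iff] at h
    simp [Fin.val_add, Nat.mod_eq_of_lt (show 2 < n + 3 by omega)] at h

lemma cycleGraph_darts_of_isTrail {u v : Fin (n + 2)} {p : (cycleGraph (n + 2)).Walk u v}
    (hp : p.IsTrail) :
    (∀ d ∈ p.darts, d.snd = d.fst + 1) ∨ (∀ d ∈ p.darts, d.fst = d.snd + 1) := by
  induction p with
  | nil => simp
  | @cons a b c h q ih =>
    rw [Walk.isTrail_cons] at hp
    cases q with
    | nil => simpa using cycleGraph_adj_iff.mp h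
    | @cons _ d _ h' r =>
      have had : a ≠ d := by
        rintro rfl
        exact hp.2 (by simp [Sym2.eq_swap])
      simp only [Walk.darts_cons, List.mem_cons, forall_eq_or_imp] at ih ⊢
      rcases ih hp.1 with ⟨hbd, hr⟩ | ⟨hbd, hr⟩ <;> rcases cycleGraph_adj_iff.mp h with hab | hab
      · exact .inl ⟨hab, hbd, hr⟩
      · exact absurd (hab.trans hbd.symm) had
      · exact absurd (add_right_cancel (hab.symm.trans hbd)) had
      · exact .inr ⟨hab, hbd, hr⟩

lemma cycleGraph_edges_eq_of_forall_darts [NeZero n] {u v : Fin n} {p : (cycleGraph n).Walk u v}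
    (hp : ∀ d ∈ p.darts, d.snd = d.fst + 1) :
    p.edges = (List.range p.length).map fun i : ℕ => s(u + i, u + i + 1) := by
  induction p with
  | nil => simp
  | cons h q ih =>
    simp only [Walk.darts_cons, List.mem_cons, forall_eq_or_imp] at hp
    simp only [Walk.edges_cons, Walk.length_cons, List.range_succ_eq_map, List.map_cons,
      List.map_map, ih hp.2, hp.1]
    simp [Function.comp_def, add_assoc, add_comm (1 : Fin n)]

lemma cycleGraph_exists_mem_edges_of_isTrail {u v : Fin (n + 2)}
    {p : (cycleGraph (n + 2)).Walk u v} (hp : p.IsTrail) :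
    ∃ t : Fin (n + 2), ∀ i < p.length, s(t + i, t + i + 1) ∈ p.edges := by
  rcases cycleGraph_darts_of_isTrail hp with hf | hb
  · refine ⟨u, fun i hi => ?_⟩
    rw [cycleGraph_edges_eq_of_forall_darts hf]
    exact List.mem_map_of_mem (List.mem_range.mpr hi)
  · have hf : ∀ d ∈ p.reverse.darts, d.snd = d.fst + 1 := by
      simp only [Walk.darts_reverse, List.mem_reverse, List.mem_map]
      rintro _ ⟨d, hd, rfl⟩
      exact hb d hd
    refine ⟨v, fun i hi => ?_⟩
    rw [← List.mem_reverse, ← Walk.edges_reverse, cycleGraph_edges_eq_of_forall_darts hf]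
    exact List.mem_map_of_mem (List.mem_range.mpr (by simpa using hi))

noncomputable def cycleEdgeColoring [NeZero n] (c : Fin n → ℕ) : Sym2 (Fin n) → ℕ :=
  Function.extend (fun j => s(j, j + 1)) c 0

lemma cycleEdgeColoring_apply (c : Fin (n + 3) → ℕ) (j : Fin (n + 3)) :
    cycleEdgeColoring c s(j, j + 1) = c j :=
  cycleGraph_edge_injective.extend_apply c 0 j

theorem isStarEdgeColoring_cycleEdgeColoring {c : Fin (n + 3) → ℕ} (hc : IsStarCycleColoring c) :
    IsStarEdgeColoring (cycleGraph (n + 3)) (cycleEdgeColoring c) := by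
  have hbichrom : ∀ {u v} (p : (cycleGraph (n + 3)).Walk u v), p.IsTrail → p.length = 4 →
      ¬∃ c₁ c₂ : ℕ, ∀ e ∈ p.edges, cycleEdgeColoring c e = c₁ ∨ cycleEdgeColoring c e = c₂ := by
    rintro u v p hp h4 ⟨γ₁, γ₂, hγ⟩
    obtain ⟨t, ht⟩ := cycleGraph_exists_mem_edges_of_isTrail hp
    refine hc.not_bichromatic t γ₁ γ₂ fun i hi => ?_
    simpa only [cycleEdgeColoring_apply] using hγ _ (ht i (h4 ▸ hi))
  refine ⟨?_, fun u v p hp h4 => hbichrom p hp.isTrail h4,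
    fun u p hp h4 => hbichrom p hp.isTrail h4⟩
  rintro e₁ he₁ e₂ he₂ ⟨hne, x, hx₁, hx₂⟩
  obtain ⟨j, rfl⟩ := cycleGraph_exists_eq_of_mem_edgeSet he₁
  obtain ⟨k, rfl⟩ := cycleGraph_exists_eq_of_mem_edgeSet he₂
  rw [cycleEdgeColoring_apply, cycleEdgeColoring_apply]
  rw [Sym2.mem_iff] at hx₁ hx₂
  rcases hx₁ with rfl | rfl <;> rcases hx₂ with h | h
  · exact absurd (by rw [h]) hne
  · rw [h]; exact ((hc k).1).symm
  · rw [← h]; exact (hc j).1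
  · exact absurd (by rw [add_right_cancel h]) hne

end SimpleGraph

section StarChoosable

variable {V : Type*} {G : SimpleGraph V}

lemma StarChoosable.mono {k k' : ℕ} (h : StarChoosable G k) (hk : k ≤ k') :
    StarChoosable G k' :=
  fun L hL => h L fun e he => hk.trans (hL e he)

lemma StarChoosable.exists_zero_one (h : StarChoosable G 2) :
    ∃ φ : Sym2 V → ℕ, (∀ e ∈ G.edgeSet, φ e = 0 ∨ φ e = 1) ∧ IsStarEdgeColoring G φ := by
  obtain ⟨φ, hφ, hstar⟩ := h (fun _ => {0, 1}) fun _ _ => by decide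
  exact ⟨φ, fun e he => by simpa using hφ e he, hstar⟩

lemma not_starChoosable_two_of_isPath {u v : V} {p : G.Walk u v} (hp : p.IsPath)
    (h4 : p.length = 4) : ¬StarChoosable G 2 := fun h => by
  obtain ⟨φ, hφ, -, hpath, -⟩ := h.exists_zero_one
  exact hpath u v p hp h4 ⟨0, 1, fun e he => hφ e (p.edges_subset_edgeSet he)⟩

lemma not_starChoosable_two_of_isCycle {u : V} {p : G.Walk u u} (hp : p.IsCycle)
    (h4 : p.length = 4) : ¬StarChoosable G 2 := fun h => by
  obtain ⟨φ, hφ, -, -, hcycle⟩ := h.exists_zero_one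
  exact hcycle u p hp h4 ⟨0, 1, fun e he => hφ e (p.edges_subset_edgeSet he)⟩

lemma not_starChoosable_two_of_triangle {a b c : V} (hab : G.Adj a b) (hbc : G.Adj b c)
    (hca : G.Adj c a) : ¬StarChoosable G 2 := fun h => by
  obtain ⟨φ, hφ, hproper, -⟩ := h.exists_zero_one
  have h₁ := hproper s(a, b) hab s(b, c) hbc ⟨by simp [hab.ne, hca.ne.symm], b, by simp, by simp⟩
  have h₂ := hproper s(b, c) hbc s(c, a) hca ⟨by simp [hbc.ne, hab.ne.symm], c, by simp, by simp⟩
  have h₃ := hproper s(c, a) hca s(a, b) hab ⟨by simp [hca.ne, hbc.ne.symm], a, by simp, by simp⟩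
  have := hφ s(a, b) hab
  have := hφ s(b, c) hbc
  have := hφ s(c, a) hca
  omega

end StarChoosable

theorem starChoosable_three_cycleGraph {n : ℕ} (hn : 3 ≤ n) (hn5 : n ≠ 5) :
    StarChoosable (cycleGraph n) 3 := by
  obtain ⟨m, rfl⟩ : ∃ m, n = m + 3 := ⟨n - 3, by omega⟩
  intro L hL
  obtain ⟨c, hcL, hc⟩ := exists_isStarCycleColoring hn hn5 (L := fun j => L s(j, j + 1))
    fun j => hL _ (cycleGraph_edge_mem j)
  refine ⟨cycleEdgeColoring c, fun e he => ?_, isStarEdgeColoring_cycleEdgeColoring hc⟩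
  obtain ⟨j, rfl⟩ := cycleGraph_exists_eq_of_mem_edgeSet he
  rw [cycleEdgeColoring_apply]
  exact hcL j

theorem not_starChoosable_two_cycleGraph {n : ℕ} (hn : 3 ≤ n) :
    ¬StarChoosable (cycleGraph n) 2 := by
  obtain ⟨m, rfl⟩ : ∃ m, n = m + 3 := ⟨n - 3, by omega⟩
  have hC := cycleGraph.isCycle_cycle (n := m)
  obtain rfl | rfl | hm : m = 0 ∨ m = 1 ∨ 2 ≤ m := by omega
  · exact not_starChoosable_two_of_triangle (a := 0) (b := 1) (c := 2) (by decide) (by decide)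
      (by decide)
  · exact not_starChoosable_two_of_isCycle hC (by simp)
  · exact not_starChoosable_two_of_isPath (hC.isPath_take (n := 4) (by simp; omega))
      (by simp [Walk.take_length]; omega)

theorem stmt_6 (n : ℕ) (hn : 3 ≤ n) (hn5 : n ≠ 5) :
    listStarChromaticIndex (SimpleGraph.cycleGraph n) = 3 :=
  (Nat.sInf_upward_closed_eq_succ_iff (fun _ _ hk h => h.mono hk) 2).mpr
    ⟨starChoosable_three_cycleGraph hn hn5, not_starChoosable_two_cycleGraph hn⟩
end

section
/- If P is a path (tree with maximum degree 2) with at least one edge, then ch'_star(P) ≤ ⌊(θ(P) + Δ(P))/2⌋, where θ(P) is the maximum Ore-degree. -/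
open SimpleGraph
open scoped Classical

/-! A coloring that separates edges at distance at most two in the line graph (a strong edge
coloring) is a star edge coloring, because any three consecutive edges of a trail are pairwise at
that distance. In a forest of maximum degree two the edges near a pendant edge `uv` all pass
through the other neighbour of `u`, so there are at most two of them, and never more than the
remaining edges; deleting pendant edges one at a time, lists of size `min 3 m` therefore admit a
strong list coloring, `m` being the number of edges. For a path with `m` edges, `θ ≥ 2`; counting
degrees, `m ≥ 2` forces a vertex of degree two, so `Δ = 2`, and `m ≥ 3` forces two of them, hence
two adjacent ones (on the path joining them), so `θ = 4`. Thus `min 3 m ≤ ⌊(θ + Δ) / 2⌋`. -/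

open Finset

lemma EdgeAdj.symm {V : Type*} {e f : Sym2 V} (h : EdgeAdj e f) : EdgeAdj f e :=
  ⟨h.1.symm, h.2.imp fun _ hv => hv.symm⟩

namespace SimpleGraph

variable {V : Type*}

/-- Distance at most two in the line graph of `G`. -/
def EdgeNear (G : SimpleGraph V) (e f : Sym2 V) : Prop :=
  e ≠ f ∧ ((∃ v, v ∈ e ∧ v ∈ f) ∨ ∃ g ∈ G.edgeSet, EdgeAdj e g ∧ EdgeAdj g f)

lemma EdgeNear.symm {G : SimpleGraph V} {e f : Sym2 V} (h : EdgeNear G e f) : EdgeNear G f e :=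
  ⟨h.1.symm, h.2.imp (fun ⟨v, he, hf⟩ => ⟨v, hf, he⟩)
    fun ⟨g, hg, heg, hgf⟩ => ⟨g, hg, hgf.symm, heg.symm⟩⟩

def IsStrongEdgeColoring (G : SimpleGraph V) (φ : Sym2 V → ℕ) : Prop :=
  ∀ e ∈ G.edgeSet, ∀ f ∈ G.edgeSet, EdgeNear G e f → φ e ≠ φ f

namespace IsStrongEdgeColoring

variable {G : SimpleGraph V} {φ : Sym2 V → ℕ}

/-- The first three edges of the trail are pairwise near, so they carry three colors. -/
lemma not_two_colored (hφ : IsStrongEdgeColoring G φ) {u v : V} (p : G.Walk u v)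
    (hp : p.edges.Nodup) (hlen : 3 ≤ p.length) :
    ¬ ∃ c₁ c₂ : ℕ, ∀ e ∈ p.edges, φ e = c₁ ∨ φ e = c₂ := by
  rcases p with _ | ⟨h₁, _ | ⟨h₂, _ | ⟨h₃, q⟩⟩⟩
  all_goals try (simp at hlen; done)
  rename_i a b c
  simp only [Walk.edges_cons, List.nodup_cons, List.mem_cons, not_or] at hp
  obtain ⟨⟨h₁₂, h₁₃, -⟩, ⟨h₂₃, -⟩, -⟩ := hp
  have n₁₂ : EdgeNear G s(u, a) s(a, b) := ⟨h₁₂, Or.inl ⟨a, by simp, by simp⟩⟩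
  have n₂₃ : EdgeNear G s(a, b) s(b, c) := ⟨h₂₃, Or.inl ⟨b, by simp, by simp⟩⟩
  have n₁₃ : EdgeNear G s(u, a) s(b, c) :=
    ⟨h₁₃, Or.inr ⟨s(a, b), h₂, ⟨h₁₂, a, by simp, by simp⟩, ⟨h₂₃, b, by simp, by simp⟩⟩⟩
  have d₁₂ := hφ _ h₁ _ h₂ n₁₂
  have d₂₃ := hφ _ h₂ _ h₃ n₂₃
  have d₁₃ := hφ _ h₁ _ h₃ n₁₃
  rintro ⟨c₁, c₂, hc⟩
  have := hc s(u, a) (by simp)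
  have := hc s(a, b) (by simp)
  have := hc s(b, c) (by simp)
  omega

lemma isStarEdgeColoring (hφ : IsStrongEdgeColoring G φ) : IsStarEdgeColoring G φ :=
  ⟨fun e he f hf hef => hφ e he f hf ⟨hef.1, Or.inl hef.2⟩,
    fun _ _ p hp hlen => hφ.not_two_colored p hp.edges_nodup (by omega),
    fun _ p hp hlen => hφ.not_two_colored p hp.edges_nodup (by omega)⟩

end IsStrongEdgeColoring

section PendantEdge

variable {G : SimpleGraph V} {u v : V}

lemma eq_of_mem_of_pendant (hv : ∀ w, G.Adj v w → w = u) {f : Sym2 V} (hf : f ∈ G.edgeSet)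
    (hvf : v ∈ f) : f = s(u, v) := by
  obtain ⟨w, rfl⟩ := Sym2.mem_iff_exists.mp hvf
  rw [hv w hf, Sym2.eq_swap]

lemma mem_of_edgeAdj_pendant (hv : ∀ w, G.Adj v w → w = u) {f : Sym2 V} (hf : f ∈ G.edgeSet)
    (h : EdgeAdj s(u, v) f) : u ∈ f := by
  obtain ⟨hne, w, hw, hwf⟩ := h
  rcases Sym2.mem_iff.mp hw with rfl | rfl
  · exact hwf
  · exact absurd (eq_of_mem_of_pendant hv hf hwf).symm hne

/-- `y` is the neighbour of `u` other than `v`. -/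
lemma exists_mem_of_edgeNear_pendant [Fintype (G.neighborSet u)] (huv : G.Adj u v)
    (hv : ∀ w, G.Adj v w → w = u) (hu : G.degree u ≤ 2) :
    ∃ y, ∀ f ∈ G.edgeSet, EdgeNear G s(u, v) f → y ∈ f := by
  classical
  have : Nonempty V := ⟨u⟩
  obtain ⟨y, hy⟩ : ∃ y, (G.neighborFinset u).erase v ⊆ {y} := by
    rw [← card_le_one_iff_subset_singleton, card_erase_of_mem (by simpa using huv),
      card_neighborFinset_eq_degree]
    omega
  have hat_u : ∀ g ∈ G.edgeSet, u ∈ g → g ≠ s(u, v) → g = s(u, y) := by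
    intro g hg hug hne
    obtain ⟨w, rfl⟩ := Sym2.mem_iff_exists.mp hug
    have hwv : w ≠ v := by rintro rfl; exact hne rfl
    have := hy (mem_erase.mpr ⟨hwv, by simpa using hg⟩)
    rw [mem_singleton.mp this]
  refine ⟨y, fun f hf => ?_⟩
  rintro ⟨hne, ⟨w, hw, hwf⟩ | ⟨g, hg, hge, hgf⟩⟩
  · rw [hat_u f hf (mem_of_edgeAdj_pendant hv hf ⟨hne, w, hw, hwf⟩) hne.symm]
    exact Sym2.mem_mk_right _ _
  · obtain rfl := hat_u g hg (mem_of_edgeAdj_pendant hv hg hge) hge.1.symm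
    obtain ⟨-, w, hw, hwf⟩ := hgf
    rcases Sym2.mem_iff.mp hw with rfl | rfl
    · rw [hat_u f hf hwf hne.symm]
      exact Sym2.mem_mk_right _ _
    · exact hwf

lemma IsStrongEdgeColoring.update_pendant (hv : ∀ w, G.Adj v w → w = u) {φ : Sym2 V → ℕ} {c : ℕ}
    (hφ : IsStrongEdgeColoring (G.deleteEdges {s(u, v)}) φ)
    (hc : ∀ f ∈ G.edgeSet, EdgeNear G s(u, v) f → φ f ≠ c) :
    IsStrongEdgeColoring G (Function.update φ s(u, v) c) := by
  have hmem : ∀ {f}, f ∈ G.edgeSet → f ≠ s(u, v) → f ∈ (G.deleteEdges {s(u, v)}).edgeSet :=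
    fun hf hne => by simpa [edgeSet_deleteEdges] using ⟨hf, hne⟩
  intro f₁ hf₁ f₂ hf₂ hnear
  by_cases h₁ : f₁ = s(u, v) <;> by_cases h₂ : f₂ = s(u, v)
  · exact absurd (h₁.trans h₂.symm) hnear.1
  · subst h₁
    simpa [Function.update_of_ne h₂] using (hc f₂ hf₂ hnear).symm
  · subst h₂
    simpa [Function.update_of_ne h₁] using hc f₁ hf₁ hnear.symm
  rw [Function.update_of_ne h₁, Function.update_of_ne h₂]
  refine hφ f₁ (hmem hf₁ h₁) f₂ (hmem hf₂ h₂) ⟨hnear.1, ?_⟩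
  rcases hnear.2 with hshare | ⟨g, hg, h₁g, hg₂⟩
  · exact Or.inl hshare
  by_cases hg_uv : g = s(u, v)
  · subst hg_uv
    -- both edges meet the pendant edge, hence share `u`
    exact Or.inl ⟨u, mem_of_edgeAdj_pendant hv hf₁ h₁g.symm, mem_of_edgeAdj_pendant hv hf₂ hg₂⟩
  · exact Or.inr ⟨g, hmem hg hg_uv, h₁g, hg₂⟩

end PendantEdge

/-- The start of a longest path is a leaf. -/
lemma IsAcyclic.exists_pendant_edge [Fintype V] {G : SimpleGraph V} (hG : G.IsAcyclic) {x y : V}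
    (hxy : G.Adj x y) : ∃ u v, G.Adj u v ∧ ∀ w, G.Adj v w → w = u := by
  classical
  have : Nonempty (Σ a b, G.Path a b) := ⟨⟨x, y, Path.singleton hxy⟩⟩
  obtain ⟨⟨a, b, p, hp⟩, hmax⟩ := Finite.exists_max fun q : Σ a b, G.Path a b => q.2.2.1.length
  have hnil : ¬ p.Nil := by
    intro hn
    have := hmax ⟨x, y, Path.singleton hxy⟩
    simp [Walk.length_eq_zero_iff.mpr hn] at this
  refine ⟨p.snd, a, (p.adj_snd hnil).symm, fun w hw => hG.eq_snd_of_adj_start hp hw ?_⟩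
  by_contra hws
  have := hmax ⟨w, b, Walk.cons hw.symm p, hp.cons hws⟩
  simp at this

lemma IsAcyclic.exists_strongEdgeColoring_mem [Fintype V] {G : SimpleGraph V} (hG : G.IsAcyclic)
    (hdeg : ∀ v, G.degree v ≤ 2) (L : Sym2 V → Finset ℕ)
    (hL : ∀ e ∈ G.edgeSet, min 3 #G.edgeFinset ≤ #(L e)) :
    ∃ φ : Sym2 V → ℕ, (∀ e ∈ G.edgeSet, φ e ∈ L e) ∧ IsStrongEdgeColoring G φ := by
  induction h : #G.edgeFinset generalizing G with
  | zero =>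
    have hE : G.edgeSet = ∅ := by simpa [← coe_edgeFinset] using h
    exact ⟨0, by simp [hE], by simp [IsStrongEdgeColoring, hE]⟩
  | succ n ih =>
    obtain ⟨e₀, he₀⟩ := card_pos.mp (by omega : 0 < #G.edgeFinset)
    obtain ⟨u, v, huv, hv⟩ : ∃ u v, G.Adj u v ∧ ∀ w, G.Adj v w → w = u := by
      induction e₀ using Sym2.ind with
      | _ x y => exact hG.exists_pendant_edge (G.mem_edgeSet.mp (G.mem_edgeFinset.mp he₀))
    obtain ⟨G', hG'⟩ : ∃ G', G' = G.deleteEdges {s(u, v)} := ⟨_, rfl⟩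
    have hle : G' ≤ G := hG' ▸ G.deleteEdges_le _
    have hE' : G'.edgeSet = G.edgeSet \ {s(u, v)} := hG' ▸ G.edgeSet_deleteEdges _
    have hcard : #G'.edgeFinset = n := by
      rw [show G'.edgeFinset = G.edgeFinset.erase s(u, v) by ext; simp [hE', and_comm],
        card_erase_of_mem (by simpa using huv), h, Nat.add_sub_cancel]
    obtain ⟨φ, hφL, hφ⟩ := ih (hG.anti hle) (fun w => (degree_le_of_le hle).trans (hdeg w))
      (fun e he => by have := hL e (edgeSet_mono hle he); omega) hcard
    obtain ⟨y, hy⟩ := exists_mem_of_edgeNear_pendant huv hv (hdeg u)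
    have hforb : #((G'.incidenceFinset y).image φ) < #(L s(u, v)) := by
      refine card_image_le.trans_lt (lt_of_lt_of_le ?_ (hL _ huv))
      have := card_le_card (G'.incidenceFinset_subset y)
      rw [card_incidenceFinset_eq_degree] at this ⊢
      have := (degree_le_of_le hle).trans (hdeg y)
      omega
    obtain ⟨c, hcL, hc⟩ := exists_mem_notMem_of_card_lt_card hforb
    refine ⟨Function.update φ s(u, v) c, fun e he => ?_,
      (hG' ▸ hφ).update_pendant hv fun f hf hnear hfc => hc (mem_image.mpr ⟨f, ?_, hfc⟩)⟩
    · by_cases he' : e = s(u, v)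
      · simpa [he'] using hcL
      · simpa [he'] using hφL e (by simpa [hE'] using ⟨he, he'⟩)
    · rw [mem_incidenceFinset]
      exact ⟨by simpa [hE'] using ⟨hf, hnear.1.symm⟩, hy f hf hnear⟩

lemma IsAcyclic.starChoosable_min_three [Fintype V] {G : SimpleGraph V} (hG : G.IsAcyclic)
    (hdeg : ∀ v, G.degree v ≤ 2) : StarChoosable G (min 3 #G.edgeFinset) := fun L hL => by
  obtain ⟨φ, hφL, hφ⟩ := hG.exists_strongEdgeColoring_mem hdeg L hL
  exact ⟨φ, hφL, hφ.isStarEdgeColoring⟩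

lemma le_oreDegree [Fintype V] {G : SimpleGraph V} {x y : V} (h : G.Adj x y) :
    G.degree x + G.degree y ≤ oreDegree G := by
  refine le_csSup ⟨2 * G.maxDegree, ?_⟩ ⟨x, y, h, rfl⟩
  rintro n ⟨a, b, -, rfl⟩
  have := G.degree_le_maxDegree a
  have := G.degree_le_maxDegree b
  omega

lemma two_mul_card_edgeFinset_le [Fintype V] {G : SimpleGraph V} (hdeg : ∀ v, G.degree v ≤ 2) :
    2 * #G.edgeFinset ≤ Fintype.card V + #{v | 2 ≤ G.degree v} := by
  rw [← sum_degrees_eq_twice_card_edges, card_filter, ← card_univ, card_eq_sum_ones,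
    ← sum_add_distrib]
  gcongr with v
  have := hdeg v
  split_ifs <;> omega

lemma two_le_degree_of_adj_of_adj [Fintype V] {G : SimpleGraph V} {x y w : V} (hx : G.Adj y x)
    (hw : G.Adj y w) (hxw : x ≠ w) : 2 ≤ G.degree y := by
  rw [← card_neighborFinset_eq_degree, ← card_pair hxw]
  exact card_le_card (by simp [insert_subset_iff, hx, hw])

/-- The first step of a path from `x` to `z` lands on `z` or on an interior vertex. -/
lemma Reachable.exists_adj_two_le_degree [Fintype V] {G : SimpleGraph V} {x z : V}
    (h : G.Reachable x z) (hxz : x ≠ z) (hz : 2 ≤ G.degree z) :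
    ∃ y, G.Adj x y ∧ 2 ≤ G.degree y := by
  obtain ⟨p, hp⟩ := h.exists_isPath
  cases p with
  | nil => exact absurd rfl hxz
  | cons hxy q =>
    refine ⟨_, hxy, ?_⟩
    cases q with
    | nil => exact hz
    | cons hyw r =>
      have hx := ((Walk.cons_isPath_iff _ _).mp hp).2
      exact two_le_degree_of_adj_of_adj hxy.symm hyw fun hxw => hx (by simp [hxw])

end SimpleGraph

theorem stmt_14 {V : Type*} [Fintype V] (P : SimpleGraph V) (hP : P.IsTree)
    (hΔ : P.maxDegree ≤ 2) (hE : P.edgeSet.Nonempty) :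
    listStarChromaticIndex P ≤ (oreDegree P + P.maxDegree) / 2 := by
  have hdeg : ∀ v, P.degree v ≤ 2 := fun v => (P.degree_le_maxDegree v).trans hΔ
  refine (Nat.sInf_le (hP.isAcyclic.starChoosable_min_three hdeg)).trans ?_
  obtain ⟨a, b, hab⟩ : ∃ a b, P.Adj a b := by
    obtain ⟨e, he⟩ := hE
    induction e using Sym2.ind with
    | _ a b => exact ⟨a, b, he⟩
  have hθ₂ : 2 ≤ oreDegree P := by
    have := P.degree_pos_iff_exists_adj a |>.mpr ⟨b, hab⟩
    have := P.degree_pos_iff_exists_adj b |>.mpr ⟨a, hab.symm⟩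
    have := le_oreDegree hab
    omega
  have hcount := two_mul_card_edgeFinset_le hdeg
  have hcardV := hP.card_edgeFinset
  have hΔ₂ : 2 ≤ #P.edgeFinset → 2 ≤ P.maxDegree := fun hm => by
    obtain ⟨v, hv⟩ := card_pos.mp (show 0 < #{v | 2 ≤ P.degree v} by omega)
    exact (mem_filter.mp hv).2.trans (P.degree_le_maxDegree v)
  have hθ₄ : 3 ≤ #P.edgeFinset → 4 ≤ oreDegree P := fun hm => by
    obtain ⟨x, hx, z, hz, hxz⟩ := one_lt_card.mp (show 1 < #{v | 2 ≤ P.degree v} by omega)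
    obtain ⟨y, hxy, hy⟩ :=
      (hP.connected.preconnected x z).exists_adj_two_le_degree hxz (mem_filter.mp hz).2
    have := le_oreDegree hxy
    have := (mem_filter.mp hx).2
    omega
  omega
end
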